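/- arXiv:math/9210210 — 6 statements merged into one kernel-verified Lean document; each statement's English description precedes it below -/
import Mathlib

section
/- Let A be a stationary subset of ω₁ such that ω₁ \ A is also stationary, and let T be the tree of closed (in the order topology) subsets of A ordered by 'initial segment'. Then every branch of T is countable. -/
open Set

/-- The first uncountable ordinal `ω₁`. -/
noncomputable def omega1 : Ordinal := (Cardinal.aleph 1).ord

/-- A set of ordinals is a closed subset of `ω₁` if it is contained in `[0, ω₁)` and is closed
in `[0, ω₁)` with the (subspace of the) order topology. -/
def ClosedInOmega1 (K : Set Ordinal) : Prop :=
  K ⊆ Set.Iio omega1 ∧ IsClosed (Subtype.val ⁻¹' K : Set (Set.Iio omega1))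

/-- A club in `ω₁`: a closed and unbounded subset of `[0, ω₁)`. -/
def ClubInOmega1 (C : Set Ordinal) : Prop :=
  ClosedInOmega1 C ∧ ∀ o < omega1, ∃ x ∈ C, o ≤ x

/-- A stationary subset of `ω₁`: a subset of `[0, ω₁)` meeting every club. -/
def StationaryInOmega1 (A : Set Ordinal) : Prop :=
  A ⊆ Set.Iio omega1 ∧ ∀ C : Set Ordinal, ClubInOmega1 C → (A ∩ C).Nonempty

/-- `K₁` is an initial segment of `K₂`. -/
def InitialSegOf (K₁ K₂ : Set Ordinal) : Prop :=
  K₁ ⊆ K₂ ∧ ∀ x ∈ K₁, ∀ y ∈ K₂, y ≤ x → y ∈ K₁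

/-! Every member of a branch `B` is an initial segment of the union `U` of `B`. If `U` were
uncountable it would be unbounded in `ω₁`, hence closed (below any point it agrees with a single
member of `B`), so a club inside `A` missing the stationary set `ω₁ \ A`. Thus `U` is countable,
and a countable set of ordinals has only countably many initial segments: each is `U` itself or
`U ∩ [0, c)` for some `c ∈ U`. -/

universe u

lemma countable_Iio_of_lt_omega1 {o : Ordinal.{u}} (h : o < omega1.{u}) : (Iio o).Countable := by
  rw [← Cardinal.le_aleph0_iff_set_countable, Cardinal.mk_Iio_ordinal, Cardinal.lift_le_aleph0,
    ← Cardinal.lt_aleph_one_iff]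
  exact Cardinal.lt_ord.mp h

lemma exists_le_mem_of_not_countable {K : Set Ordinal.{u}} (hK : ¬K.Countable) :
    ∀ o < omega1.{u}, ∃ x ∈ K, o ≤ x := by
  intro o ho
  by_contra! h
  exact hK ((countable_Iio_of_lt_omega1 ho).mono h)

lemma closedInOmega1_iff {K : Set Ordinal.{u}} :
    ClosedInOmega1 K ↔ K ⊆ Iio omega1.{u} ∧ ∀ {ι : Type u}, Nonempty ι → ∀ f : ι → Ordinal.{u},
      (∀ i, f i ∈ K) → ⨆ i, f i < omega1.{u} → ⨆ i, f i ∈ K := by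
  refine and_congr_right fun hK => ⟨fun hclosed ι hι f hf hsup => ?_, fun hsup => ?_⟩
  · obtain ⟨C, hC, hCK⟩ := isClosed_induced_iff.1 hclosed
    have hmem : ∀ x (hx : x < omega1.{u}), x ∈ C ↔ x ∈ K := fun x hx =>
      Set.ext_iff.1 hCK ⟨x, hx⟩
    exact (hmem _ hsup).1 <|
      Ordinal.isClosed_iff_iSup.1 hC hι f fun i => (hmem _ (hK (hf i))).2 (hf i)
  · refine isClosed_induced_iff.2
      ⟨K ∪ Ici omega1, Ordinal.isClosed_iff_iSup.2 fun hι f hf => ?_, ?_⟩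
    · rcases lt_or_ge (⨆ i, f i) omega1 with hlt | hge
      · exact Or.inl <| hsup hι f (fun i => (hf i).resolve_right
          fun hi => hlt.not_ge (hi.trans (Ordinal.le_iSup f i))) hlt
      · exact Or.inr hge
    · ext z
      simp [(mem_Iio.1 z.2).not_ge]

lemma ClosedInOmega1.countable_of_disjoint {K S : Set Ordinal} (hK : ClosedInOmega1 K)
    (hS : StationaryInOmega1 S) (hKS : Disjoint K S) : K.Countable := by
  by_contra hc
  obtain ⟨x, hxS, hxK⟩ := hS.2 K ⟨hK, exists_le_mem_of_not_countable hc⟩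
  exact hKS.notMem_of_mem_left hxK hxS

lemma IsChain.initialSegOf_sUnion {𝒦 : Set (Set Ordinal)} (h𝒦 : IsChain InitialSegOf 𝒦)
    {K : Set Ordinal} (hK : K ∈ 𝒦) : InitialSegOf K (⋃₀ 𝒦) := by
  refine ⟨subset_sUnion_of_mem hK, fun x hx y ⟨L, hL, hyL⟩ hyx => ?_⟩
  rcases eq_or_ne K L with rfl | hne
  · exact hyL
  rcases h𝒦 hK hL hne with hKL | hLK
  · exact hKL.2 x hx y hyL hyx
  · exact hLK.1 hyL

lemma closedInOmega1_sUnion {𝒦 : Set (Set Ordinal.{u})} (h𝒦 : IsChain InitialSegOf 𝒦)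
    (hclosed : ∀ K ∈ 𝒦, ClosedInOmega1 K) (hunb : ∀ o < omega1.{u}, ∃ x ∈ ⋃₀ 𝒦, o ≤ x) :
    ClosedInOmega1 (⋃₀ 𝒦) := by
  refine closedInOmega1_iff.2 ⟨sUnion_subset fun K hK => (hclosed K hK).1, fun hι f hf hsup => ?_⟩
  obtain ⟨x, ⟨K, hK, hxK⟩, hsupx⟩ := hunb _ hsup
  have hfK : ∀ i, f i ∈ K := fun i =>
    (h𝒦.initialSegOf_sUnion hK).2 x hxK (f i) (hf i) ((Ordinal.le_iSup f i).trans hsupx)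
  exact subset_sUnion_of_mem hK ((closedInOmega1_iff.1 (hclosed K hK)).2 hι f hfK hsup)

lemma countable_setOf_initialSegOf {U : Set Ordinal} (hU : U.Countable) :
    {K | InitialSegOf K U}.Countable := by
  refine ((hU.image fun c => U ∩ Iio c).insert U).mono fun K hK => ?_
  rcases eq_or_ne K U with rfl | hne
  · exact mem_insert _ _
  have hdiff : (U \ K).Nonempty := by
    by_contra h
    exact hne (hK.1.antisymm (sdiff_eq_empty.1 (not_nonempty_iff_eq_empty.1 h)))
  have hc := csInf_mem hdiff
  refine mem_insert_of_mem _ ⟨_, hc.1, ?_⟩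
  ext x
  refine ⟨fun ⟨hxU, hxc⟩ => ?_, fun hxK => ⟨hK.1 hxK, ?_⟩⟩
  · by_contra hxK
    exact (mem_Iio.1 hxc).not_ge (csInf_le' ⟨hxU, hxK⟩)
  · exact mem_Iio.2 <| lt_of_not_ge fun hcx => hc.2 (hK.2 x hxK _ hc.1 hcx)

lemma IsChain.countable_sUnion_of_disjoint {𝒦 : Set (Set Ordinal)} (h𝒦 : IsChain InitialSegOf 𝒦)
    (hclosed : ∀ K ∈ 𝒦, ClosedInOmega1 K) {S : Set Ordinal} (hS : StationaryInOmega1 S)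
    (hdisj : ∀ K ∈ 𝒦, Disjoint K S) : (⋃₀ 𝒦).Countable := by
  by_contra hc
  have hclub := closedInOmega1_sUnion h𝒦 hclosed (exists_le_mem_of_not_countable hc)
  exact hc (hclub.countable_of_disjoint hS (disjoint_sUnion_left.2 hdisj))

theorem stmt2_general (A : Set Ordinal)
    (hA' : StationaryInOmega1 (Set.Iio omega1 \ A))
    (B : Set { K : Set Ordinal // K ⊆ A ∧ ClosedInOmega1 K })
    (hB : IsMaxChain (fun K₁ K₂ => InitialSegOf K₁.1 K₂.1) B) :
    B.Countable := by
  have hchain : IsChain InitialSegOf (Subtype.val '' B) :=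
    hB.1.image_of_map_rel _ _ Subtype.val fun _ _ h => h
  have hU : (⋃₀ (Subtype.val '' B)).Countable := by
    refine hchain.countable_sUnion_of_disjoint ?_ hA' ?_
    · rintro _ ⟨K, -, rfl⟩
      exact K.2.2
    · rintro _ ⟨K, -, rfl⟩
      exact disjoint_sdiff_right.mono_left K.2.1
  exact ((countable_setOf_initialSegOf hU).preimage Subtype.val_injective).mono
    fun K hK => hchain.initialSegOf_sUnion (mem_image_of_mem _ hK)

/-- If `A ⊆ ω₁` is stationary with stationary complement, then every branch (maximal chain) of
the Todorcevic tree `T` of closed subsets of `A`, ordered by "initial segment", is countable. -/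
theorem stmt2 (A : Set Ordinal) (hA : StationaryInOmega1 A)
    (hA' : StationaryInOmega1 (Set.Iio omega1 \ A))
    (B : Set { K : Set Ordinal // K ⊆ A ∧ ClosedInOmega1 K })
    (hB : IsMaxChain (fun K₁ K₂ => InitialSegOf K₁.1 K₂.1) B) :
    B.Countable :=
  stmt2_general A hA' B hB
end

section
/- The weak-star closure of the set D = { Σ_{i=1}^n λ_i s_i* : s_i ∈ S pairwise disjoint, Σ λ_i² ≤ 1 } contains all extreme points of the unit ball of JS*. -/
/-!
Pairing with finitely supported functions identifies the continuous functionals on `Γ → ℝ`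
(product topology) with `Γ →₀ ℝ`, and every value in `jamesSet S φ` is attained as `dPair d φ`
for some `d ∈ Dset S` (equality case of Cauchy–Schwarz). Hahn–Banach separation therefore shows
that the dual ball is the closed convex hull of `Dset S`. The dual ball is a closed subset of
`[-1, 1]^Γ`, hence compact, so Milman's converse to the Krein–Milman theorem puts its extreme
points in the closure of `Dset S`.
-/

open Set Filter Topology
open scoped Classical

variable {Γ : Type*}

/-- Sum of a finitely supported function `φ` over a set `s` (i.e. `s*(φ) = Σ_{a∈s} φ(a)`). -/
noncomputable def segSum (s : Set Γ) (φ : Γ →₀ ℝ) : ℝ :=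
  ∑ a ∈ φ.support, if a ∈ s then φ a else 0

/-- The candidate values `(Σ_i (Σ_{a∈s_i} φ(a))²)^{1/2}` over finite pairwise disjoint
families `{s_1,…,s_n} ⊆ S`. -/
noncomputable def jamesSet (S : Set (Set Γ)) (φ : Γ →₀ ℝ) : Set ℝ :=
  { r | ∃ F : Finset (Set Γ), ↑F ⊆ S ∧ (F : Set (Set Γ)).Pairwise Disjoint ∧
      r = Real.sqrt (∑ s ∈ F, (segSum s φ) ^ 2) }

/-- The James-`S` norm on finitely supported functions. -/
noncomputable def jamesNorm (S : Set (Set Γ)) (φ : Γ →₀ ℝ) : ℝ :=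
  sSup (jamesSet S φ)

/-- The characteristic function of a set, viewed in `Γ → ℝ`. -/
noncomputable def indicatorFun (s : Set Γ) : Γ → ℝ := s.indicator fun _ => 1

/-- A family of subsets of `Γ` is countably intersected (Definition 1.1). -/
structure IsCI (S : Set (Set Γ)) : Prop where
  /-- (a) pointwise closed -/
  closed : IsClosed (indicatorFun '' S)
  /-- (a) members countable -/
  countable : ∀ s ∈ S, s.Countable
  /-- (a) contains singletons -/
  singletons : ∀ γ : Γ, {γ} ∈ S
  /-- (b) differences are finite disjoint unions of members -/
  diff : ∀ s ∈ S, ∀ t ∈ S, ∃ F : Finset (Set Γ), ↑F ⊆ S ∧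
    (F : Set (Set Γ)).Pairwise Disjoint ∧ s \ t = ⋃₀ ↑F
  /-- (c) the enveloping condition -/
  env : ∃ st : Set Γ → Set Γ, (∀ t ∈ S, st t ∈ S ∧ t ⊆ st t) ∧
    ∀ s ∈ S, ∀ n : ℕ, ∀ ts : Fin n → Set Γ, (∀ i, ts i ∈ S) →
      ∃ t ∈ S, t ⊆ s \ (⋃ i, st (ts i)) ∧ (s \ ((⋃ i, st (ts i)) ∪ t)).Finite
  /-- (d) each `L_s = {s ∩ t : t ∈ S}` is countable -/
  inter_countable : ∀ s ∈ S, { u : Set Γ | ∃ t ∈ S, u = s ∩ t }.Countable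

/-- Pairing of a "dual vector" `g : Γ → ℝ` with a finitely supported function. -/
noncomputable def dPair (g : Γ → ℝ) (φ : Γ →₀ ℝ) : ℝ := ∑ a ∈ φ.support, φ a * g a

/-- The unit ball of the dual of `JS`, modelled as those `g : Γ → ℝ` whose pairing with every
finitely supported function is dominated by the James-`S` norm; the product topology on
`Γ → ℝ` is the weak-star topology on this ball. -/
def dualBall (S : Set (Set Γ)) : Set (Γ → ℝ) :=
  { g | ∀ φ : Γ →₀ ℝ, |dPair g φ| ≤ jamesNorm S φ }

/-- The dual norm of `g` as a functional on `(Φ, ‖·‖_{J-S})`. -/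
noncomputable def dualNorm (S : Set (Set Γ)) (g : Γ → ℝ) : ℝ :=
  sSup { r | ∃ φ : Γ →₀ ℝ, jamesNorm S φ ≤ 1 ∧ r = |dPair g φ| }

/-- The set `D = {Σ_{i=1}^n λ_i s_i* : s_i ∈ S pairwise disjoint, Σ λ_i² ≤ 1}`. -/
def Dset (S : Set (Set Γ)) : Set (Γ → ℝ) :=
  { g | ∃ (n : ℕ) (l : Fin n → ℝ) (s : Fin n → Set Γ), (∀ i, s i ∈ S) ∧
      Pairwise (Function.onFun Disjoint s) ∧ (∑ i, l i ^ 2) ≤ 1 ∧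
      g = fun γ => ∑ i, if γ ∈ s i then l i else 0 }

section MilmanConverse

variable {E : Type*} [AddCommGroup E] [Module ℝ E] [TopologicalSpace E] [IsTopologicalAddGroup E]
  [ContinuousSMul ℝ E]

theorem isCompact_convexJoin {s t : Set E} (hs : IsCompact s) (ht : IsCompact t) :
    IsCompact (convexJoin ℝ s t) := by
  have himage : convexJoin ℝ s t =
      (fun p : ℝ × E × E => (1 - p.1) • p.2.1 + p.1 • p.2.2) '' (Icc 0 1 ×ˢ s ×ˢ t) := by
    ext x
    simp only [mem_convexJoin, segment_eq_image, mem_image, mem_prod, Prod.exists]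
    aesop
  rw [himage]
  exact (isCompact_Icc.prod (hs.prod ht)).image (by fun_prop)

theorem isCompact_convexHull_biUnion {ι : Type*} (T : Finset ι) {C : ι → Set E}
    (hcomp : ∀ i ∈ T, IsCompact (C i)) (hconv : ∀ i ∈ T, Convex ℝ (C i)) :
    IsCompact (convexHull ℝ (⋃ i ∈ T, C i)) := by
  induction T using Finset.induction_on with
  | empty => simp
  | @insert i T _ ih =>
    have ih := ih (fun j hj => hcomp j (Finset.mem_insert_of_mem hj))
      (fun j hj => hconv j (Finset.mem_insert_of_mem hj))
    have hi := hcomp i (Finset.mem_insert_self i T)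
    rw [Finset.set_biUnion_insert]
    rcases (C i).eq_empty_or_nonempty with hempty | hne
    · rwa [hempty, empty_union]
    rcases (⋃ j ∈ T, C j).eq_empty_or_nonempty with hempty' | hne'
    · rwa [hempty', union_empty, (hconv i (Finset.mem_insert_self i T)).convexHull_eq]
    rw [convexHull_union hne hne', (hconv i (Finset.mem_insert_self i T)).convexHull_eq]
    exact isCompact_convexJoin hi ih

theorem exists_isClosed_convex_nhds_zero_subset [LocallyConvexSpace ℝ E] {W : Set E}
    (hW : W ∈ 𝓝 0) : ∃ U ∈ 𝓝 (0 : E), IsClosed U ∧ Convex ℝ U ∧ U ⊆ W := by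
  obtain ⟨W', ⟨hW'0, hW'closed⟩, hW'W⟩ := (closed_nhds_basis (0 : E)).mem_iff.1 hW
  obtain ⟨U, ⟨hU0, hUconv⟩, hUW'⟩ := (LocallyConvexSpace.convex_basis_zero ℝ E).mem_iff.1 hW'0
  exact ⟨closure U, Filter.mem_of_superset hU0 subset_closure, isClosed_closure, hUconv.closure,
    (closure_minimal hUW' hW'closed).trans hW'W⟩

/-- Milman's converse to the Krein–Milman theorem. -/
theorem IsCompact.extremePoints_closedConvexHull_subset [LocallyConvexSpace ℝ E] [T2Space E]
    {K : Set E} (hK : IsCompact K) (hB : IsCompact (closedConvexHull ℝ K)) :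
    (closedConvexHull ℝ K).extremePoints ℝ ⊆ K := by
  intro x hx
  rw [← hK.isClosed.closure_eq, mem_closure_iff_nhds]
  intro V hV
  have hV' : {u | x - u ∈ V} ∈ 𝓝 (0 : E) :=
    (continuous_const.sub continuous_id).continuousAt.preimage_mem_nhds (by simpa using hV)
  obtain ⟨U, hU0, hUclosed, hUconv, hUV⟩ := exists_isClosed_convex_nhds_zero_subset hV'
  set near : E → Set E := fun k => (fun y => -k + y) ⁻¹' U
  have hnear_nhds : ∀ k, near k ∈ 𝓝 k := fun k =>
    (continuous_const.add continuous_id).continuousAt.preimage_mem_nhds (by simpa using hU0)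
  -- `x` is extreme in the convex hull of the closed convex hulls of finitely many pieces of `K`,
  -- each inside a translate of `U`, so it lies in one of them
  obtain ⟨T, hTK, hKT⟩ := hK.elim_nhds_subcover near fun k _ => hnear_nhds k
  set C : E → Set E := fun k => closedConvexHull ℝ (K ∩ near k)
  have hC_near : ∀ k, C k ⊆ near k := fun k =>
    closedConvexHull_min inter_subset_right (hUconv.translate_preimage_right (-k))
      (hUclosed.preimage (continuous_const.add continuous_id))
  have hC_sub : ∀ k, C k ⊆ closedConvexHull ℝ K := fun k =>
    (closedConvexHull ℝ).monotone inter_subset_left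
  have hH : IsCompact (convexHull ℝ (⋃ k ∈ T, C k)) :=
    isCompact_convexHull_biUnion T
      (fun k _ => hB.of_isClosed_subset isClosed_closedConvexHull (hC_sub k))
      (fun k _ => convex_closedConvexHull)
  have hBH : closedConvexHull ℝ K = convexHull ℝ (⋃ k ∈ T, C k) := by
    refine (closedConvexHull_min ?_ (convex_convexHull ℝ _) hH.isClosed).antisymm
      (convexHull_min (iUnion₂_subset fun k _ => hC_sub k) convex_closedConvexHull)
    intro y hy
    obtain ⟨k, hkT, hyk⟩ := mem_iUnion₂.1 (hKT hy)
    exact subset_convexHull ℝ _ (mem_biUnion hkT (subset_closedConvexHull ⟨hy, hyk⟩))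
  rw [hBH] at hx
  obtain ⟨k, hkT, hxk⟩ := mem_iUnion₂.1 (extremePoints_convexHull_subset hx)
  refine ⟨k, ?_, hTK k hkT⟩
  simpa using hUV (hC_near k hxk)

end MilmanConverse

section JamesDual

variable {S : Set (Set Γ)} {φ : Γ →₀ ℝ}

theorem segSum_eq_sum_filter (s : Set Γ) (φ : Γ →₀ ℝ) :
    segSum s φ = ∑ a ∈ φ.support with a ∈ s, φ a :=
  (Finset.sum_filter _ _).symm

theorem dPair_sum_ite {ι : Type*} (I : Finset ι) (l : ι → ℝ) (s : ι → Set Γ) (φ : Γ →₀ ℝ) :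
    dPair (fun γ => ∑ i ∈ I, if γ ∈ s i then l i else 0) φ = ∑ i ∈ I, l i * segSum (s i) φ := by
  simp only [dPair, segSum, Finset.mul_sum]
  rw [Finset.sum_comm]
  refine Finset.sum_congr rfl fun i _ => Finset.sum_congr rfl fun a _ => ?_
  split_ifs <;> ring

theorem sum_abs_segSum_le {F : Finset (Set Γ)} (hdisj : (F : Set (Set Γ)).Pairwise Disjoint)
    (φ : Γ →₀ ℝ) : ∑ s ∈ F, |segSum s φ| ≤ ∑ a ∈ φ.support, |φ a| := by
  have hpieces : (F : Set (Set Γ)).PairwiseDisjoint fun s => {a ∈ φ.support | a ∈ s} :=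
    fun s hs t ht hst => Finset.disjoint_filter.2 fun _ _ has hat =>
      Set.disjoint_left.1 (hdisj hs ht hst) has hat
  calc ∑ s ∈ F, |segSum s φ|
      ≤ ∑ s ∈ F, ∑ a ∈ φ.support with a ∈ s, |φ a| :=
        Finset.sum_le_sum fun s _ => by
          rw [segSum_eq_sum_filter]; exact Finset.abs_sum_le_sum_abs _ _
    _ = ∑ a ∈ F.biUnion fun s => {a ∈ φ.support | a ∈ s}, |φ a| :=
        (Finset.sum_biUnion hpieces).symm
    _ ≤ ∑ a ∈ φ.support, |φ a| :=
        Finset.sum_le_sum_of_subset_of_nonneg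
          (Finset.biUnion_subset.2 fun _ _ => Finset.filter_subset _ _)
          fun _ _ _ => abs_nonneg _

theorem le_sum_abs_of_mem_jamesSet {r : ℝ} (hr : r ∈ jamesSet S φ) :
    r ≤ ∑ a ∈ φ.support, |φ a| := by
  obtain ⟨F, -, hdisj, rfl⟩ := hr
  have hl1 := sum_abs_segSum_le hdisj φ
  refine Real.sqrt_le_iff.2 ⟨(Finset.sum_nonneg fun _ _ => abs_nonneg _).trans hl1, ?_⟩
  calc ∑ s ∈ F, segSum s φ ^ 2 = ∑ s ∈ F, |segSum s φ| ^ 2 := by simp only [sq_abs]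
    _ ≤ (∑ s ∈ F, |segSum s φ|) ^ 2 := Finset.sum_sq_le_sq_sum_of_nonneg fun _ _ => abs_nonneg _
    _ ≤ (∑ a ∈ φ.support, |φ a|) ^ 2 :=
        pow_le_pow_left₀ (Finset.sum_nonneg fun _ _ => abs_nonneg _) hl1 2

theorem zero_mem_jamesSet : (0 : ℝ) ∈ jamesSet S φ :=
  ⟨∅, by simp, by simp, by simp⟩

theorem le_jamesNorm {r : ℝ} (hr : r ∈ jamesSet S φ) : r ≤ jamesNorm S φ :=
  le_csSup ⟨_, fun _ => le_sum_abs_of_mem_jamesSet⟩ hr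

theorem jamesNorm_le_sum_abs : jamesNorm S φ ≤ ∑ a ∈ φ.support, |φ a| :=
  csSup_le ⟨0, zero_mem_jamesSet⟩ fun _ => le_sum_abs_of_mem_jamesSet

theorem sqrt_sum_sq_segSum_le_jamesNorm {ι : Type*} [Fintype ι] {s : ι → Set Γ}
    (hs : ∀ i, s i ∈ S) (hdisj : Pairwise (Function.onFun Disjoint s)) (φ : Γ →₀ ℝ) :
    √(∑ i, segSum (s i) φ ^ 2) ≤ jamesNorm S φ := by
  set T : Finset ι := {i | (s i).Nonempty}
  have hinj : Set.InjOn s T := fun i hi j _ hij => by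
    by_contra hne
    have hempty : s i = ∅ := by simpa [Function.onFun, hij] using hdisj hne
    exact (Finset.mem_filter.1 hi).2.ne_empty hempty
  have hsum : ∑ i, segSum (s i) φ ^ 2 = ∑ t ∈ T.image s, segSum t φ ^ 2 := by
    rw [Finset.sum_image hinj]
    refine (Finset.sum_subset (Finset.subset_univ T) fun i _ hi => ?_).symm
    simp only [T, Finset.mem_filter, Finset.mem_univ, true_and, not_nonempty_iff_eq_empty] at hi
    simp [segSum, hi]
  refine le_jamesNorm ⟨T.image s, ?_, ?_, by rw [hsum]⟩
  · intro t ht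
    obtain ⟨i, -, rfl⟩ := Finset.mem_image.1 ht
    exact hs i
  · intro t₁ h₁ t₂ h₂ hne
    obtain ⟨i, -, rfl⟩ := Finset.mem_image.1 (Finset.mem_coe.1 h₁)
    obtain ⟨j, -, rfl⟩ := Finset.mem_image.1 (Finset.mem_coe.1 h₂)
    exact hdisj fun hij => hne (by rw [hij])

theorem abs_dPair_le_jamesNorm_of_mem_Dset {d : Γ → ℝ} (hd : d ∈ Dset S) (φ : Γ →₀ ℝ) :
    |dPair d φ| ≤ jamesNorm S φ := by
  obtain ⟨n, l, s, hs, hdisj, hl, rfl⟩ := hd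
  rw [dPair_sum_ite]
  refine (Real.abs_le_sqrt ?_).trans (sqrt_sum_sq_segSum_le_jamesNorm hs hdisj φ)
  exact (Finset.sum_mul_sq_le_sq_mul_sq _ _ _).trans
    (mul_le_of_le_one_left (Finset.sum_nonneg fun _ _ => sq_nonneg _) hl)

theorem Dset_subset_dualBall : Dset S ⊆ dualBall S :=
  fun _ hd => abs_dPair_le_jamesNorm_of_mem_Dset hd

theorem sum_ite_mem_Dset {F : Finset (Set Γ)} (hFS : ↑F ⊆ S)
    (hdisj : (F : Set (Set Γ)).Pairwise Disjoint) {w : Set Γ → ℝ} (hw : ∑ s ∈ F, w s ^ 2 ≤ 1) :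
    (fun γ => ∑ s ∈ F, if γ ∈ s then w s else 0) ∈ Dset S := by
  set e := F.equivFin
  have hreindex : ∀ f : Set Γ → ℝ, ∑ i, f (e.symm i) = ∑ s ∈ F, f s := fun f => by
    rw [← F.sum_coe_sort f]
    exact e.symm.sum_comp fun s => f s
  refine ⟨F.card, fun i => w (e.symm i), fun i => e.symm i, fun i => hFS (e.symm i).2,
    fun i j hij => hdisj (e.symm i).2 (e.symm j).2 ?_, by rwa [hreindex fun s => w s ^ 2], ?_⟩
  · exact fun h => hij (e.symm.injective (Subtype.ext h))
  · funext γ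
    exact (hreindex fun s => if γ ∈ s then w s else 0).symm

theorem exists_mem_Dset_dPair_eq {r : ℝ} (hr : r ∈ jamesSet S φ) :
    ∃ d ∈ Dset S, dPair d φ = r := by
  obtain ⟨F, hFS, hdisj, rfl⟩ := hr
  set q := ∑ s ∈ F, segSum s φ ^ 2
  have hq : 0 ≤ q := Finset.sum_nonneg fun _ _ => sq_nonneg _
  -- the weights `segSum s φ / √q` attain `√q` by the equality case of Cauchy–Schwarz;
  -- `x / 0 = 0` takes care of `q = 0`
  refine ⟨_, sum_ite_mem_Dset hFS hdisj (w := fun s => segSum s φ / √q) ?_, ?_⟩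
  · simp only [div_pow, ← Finset.sum_div, Real.sq_sqrt hq]
    exact div_self_le_one q
  · rw [dPair_sum_ite]
    simp only [div_mul_eq_mul_div, ← sq, ← Finset.sum_div]
    exact Real.div_sqrt

noncomputable def dPairCLM (φ : Γ →₀ ℝ) : (Γ → ℝ) →L[ℝ] ℝ :=
  ∑ a ∈ φ.support, φ a • ContinuousLinearMap.proj a

theorem dPairCLM_apply (φ : Γ →₀ ℝ) (g : Γ → ℝ) : dPairCLM φ g = dPair g φ := by
  simp [dPairCLM, dPair]

theorem ContinuousLinearMap.exists_eq_dPairCLM (f : (Γ → ℝ) →L[ℝ] ℝ) :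
    ∃ φ : Γ →₀ ℝ, f = dPairCLM φ := by
  have hspan : f.toLinearMap ∈ Submodule.span ℝ (Set.range fun a => LinearMap.proj a) :=
    (LinearMap.mem_span_iff_continuous _).2 f.continuous
  obtain ⟨φ, hφ⟩ := Finsupp.mem_span_range_iff_exists_finsupp.1 hspan
  refine ⟨φ, ContinuousLinearMap.ext fun g => ?_⟩
  rw [dPairCLM_apply, ← f.coe_coe, ← hφ]
  simp [Finsupp.sum, dPair, LinearMap.sum_apply]

theorem dualBall_eq_iInter :
    dualBall S = ⋂ φ, dPairCLM φ ⁻¹' Metric.closedBall 0 (jamesNorm S φ) := by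
  ext g
  simp [dualBall, dPairCLM_apply]

theorem isClosed_dualBall : IsClosed (dualBall S) := by
  rw [dualBall_eq_iInter]
  exact isClosed_iInter fun φ => Metric.isClosed_closedBall.preimage (dPairCLM φ).continuous

theorem convex_dualBall : Convex ℝ (dualBall S) := by
  rw [dualBall_eq_iInter]
  exact convex_iInter fun φ => (convex_closedBall _ _).linear_preimage (dPairCLM φ).toLinearMap

theorem abs_apply_le_one_of_mem_dualBall {g : Γ → ℝ} (hg : g ∈ dualBall S) (γ : Γ) :
    |g γ| ≤ 1 := by
  have h := (hg (Finsupp.single γ 1)).trans jamesNorm_le_sum_abs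
  simpa [dPair, Finsupp.support_single] using h

theorem isCompact_dualBall : IsCompact (dualBall S) :=
  (isCompact_univ_pi fun _ => isCompact_Icc (a := (-1 : ℝ)) (b := 1)).of_isClosed_subset
    isClosed_dualBall fun _ hg γ _ => abs_le.1 (abs_apply_le_one_of_mem_dualBall hg γ)

theorem dualBall_eq_closedConvexHull_Dset : dualBall S = closedConvexHull ℝ (Dset S) := by
  refine subset_antisymm (fun e he => ?_)
    (closedConvexHull_min Dset_subset_dualBall convex_dualBall isClosed_dualBall)
  by_contra hne
  obtain ⟨f, u, hfu, hue⟩ :=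
    geometric_hahn_banach_closed_point convex_closedConvexHull isClosed_closedConvexHull hne
  obtain ⟨φ, rfl⟩ := f.exists_eq_dPairCLM
  have hnorm : jamesNorm S φ ≤ u := csSup_le ⟨0, zero_mem_jamesSet⟩ fun r hr => by
    obtain ⟨d, hd, rfl⟩ := exists_mem_Dset_dPair_eq hr
    exact (dPairCLM_apply φ d ▸ hfu d (subset_closedConvexHull hd)).le
  have he' : dPair e φ ≤ jamesNorm S φ := (le_abs_self _).trans (he φ)
  rw [dPairCLM_apply] at hue
  linarith

end JamesDual

/-- The weak-star closure of `D = {Σ λ_i s_i* : s_i ∈ S pairwise disjoint, Σ λ_i² ≤ 1}`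
contains all extreme points of the unit ball of `JS*`.  (The dual ball is modelled inside
`Γ → ℝ`, whose product topology is the weak-star topology on bounded sets.) -/
theorem stmt6 {Γ : Type*} (S : Set (Set Γ)) :
    Set.extremePoints ℝ (dualBall S) ⊆ closure (Dset S) := by
  have hK : IsCompact (closure (Dset S)) :=
    isCompact_dualBall.of_isClosed_subset isClosed_closure
      (closure_minimal Dset_subset_dualBall isClosed_dualBall)
  have hB : dualBall S = closedConvexHull ℝ (closure (Dset S)) := by
    rw [closedConvexHull_closure_eq_closedConvexHull, dualBall_eq_closedConvexHull_Dset]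
  rw [hB]
  exact hK.extremePoints_closedConvexHull_subset (hB ▸ isCompact_dualBall)
end

section
/- Let (x_n) be a bounded sequence in JS. If for each s ∈ S the scalar sequence (s*(x_n)) is Cauchy, then (x_n) is weakly Cauchy. -/
open Set Filter Topology
open scoped Classical

variable {Γ : Type*}

set_option maxHeartbeats 1000000

/-! ### Part I : basic lemmas -/

namespace JSAux

variable {S : Set (Set Γ)}

lemma segSum_congr {s t : Set Γ} (φ : Γ →₀ ℝ)
    (h : ∀ a ∈ φ.support, a ∈ s ↔ a ∈ t) : segSum s φ = segSum t φ := by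
  unfold segSum
  refine Finset.sum_congr rfl fun a ha => ?_
  by_cases hs : a ∈ s
  · rw [if_pos hs, if_pos ((h a ha).1 hs)]
  · rw [if_neg hs, if_neg (fun ht => hs ((h a ha).2 ht))]

lemma segSum_empty (φ : Γ →₀ ℝ) : segSum (∅ : Set Γ) φ = 0 := by
  unfold segSum; simp

lemma dPair_eq_sum (g : Γ → ℝ) (φ : Γ →₀ ℝ) (T : Finset Γ) (hT : φ.support ⊆ T) :
    dPair g φ = ∑ a ∈ T, φ a * g a := by
  unfold dPair
  refine Finset.sum_subset hT fun a _ ha => ?_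
  rw [Finsupp.notMem_support_iff.1 ha, zero_mul]

lemma dPair_zero (g : Γ → ℝ) : dPair g (0 : Γ →₀ ℝ) = 0 := by
  unfold dPair; simp

lemma dPair_add (g : Γ → ℝ) (φ ψ : Γ →₀ ℝ) :
    dPair g (φ + ψ) = dPair g φ + dPair g ψ := by
  classical
  set T := φ.support ∪ ψ.support ∪ (φ + ψ).support with hT
  rw [dPair_eq_sum g (φ + ψ) T (by intro a ha; exact Finset.mem_union_right _ ha),
      dPair_eq_sum g φ T (by intro a ha; exact Finset.mem_union_left _ (Finset.mem_union_left _ ha)),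
      dPair_eq_sum g ψ T (by intro a ha; exact Finset.mem_union_left _ (Finset.mem_union_right _ ha)),
      ← Finset.sum_add_distrib]
  refine Finset.sum_congr rfl fun a _ => ?_
  rw [Finsupp.add_apply]; ring

lemma dPair_smul (g : Γ → ℝ) (c : ℝ) (φ : Γ →₀ ℝ) :
    dPair g (c • φ) = c * dPair g φ := by
  classical
  rw [dPair_eq_sum g (c • φ) φ.support (Finsupp.support_smul),
      dPair, Finset.mul_sum]
  refine Finset.sum_congr rfl fun a _ => ?_
  rw [Finsupp.smul_apply]; simp [smul_eq_mul]; ring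

lemma dPair_neg (g : Γ → ℝ) (φ : Γ →₀ ℝ) : dPair g (-φ) = - dPair g φ := by
  have := dPair_smul g (-1) φ
  simpa using this

lemma dPair_sub (g : Γ → ℝ) (φ ψ : Γ →₀ ℝ) :
    dPair g (φ - ψ) = dPair g φ - dPair g ψ := by
  rw [sub_eq_add_neg, dPair_add, dPair_neg]; ring

lemma dPair_finsum (g : Γ → ℝ) (N : ℕ) (c : ℕ → ℝ) (φ : ℕ → Γ →₀ ℝ) :
    dPair g (∑ n ∈ Finset.range N, c n • φ n) = ∑ n ∈ Finset.range N, c n * dPair g (φ n) := by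
  induction N with
  | zero => simp [dPair_zero]
  | succ N ih =>
      rw [Finset.sum_range_succ, Finset.sum_range_succ, dPair_add, dPair_smul, ih]

/-- segSum of x over the support, as pairing with the indicator. -/
lemma dPair_indicator (s : Set Γ) (φ : Γ →₀ ℝ) :
    dPair (indicatorFun s) φ = segSum s φ := by
  unfold dPair segSum indicatorFun
  refine Finset.sum_congr rfl fun a _ => ?_
  by_cases h : a ∈ s <;> simp [Set.indicator_apply, h]

lemma zero_mem_jamesSet (φ : Γ →₀ ℝ) : (0 : ℝ) ∈ jamesSet S φ := by
  refine ⟨∅, by simp, by simp, by simp⟩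

lemma jamesSet_nonempty (φ : Γ →₀ ℝ) : (jamesSet S φ).Nonempty := ⟨0, zero_mem_jamesSet φ⟩

/-- at most one member of a pairwise disjoint finite family satisfies `a ∈ ·`. -/
lemma sum_ite_mem_le {F : Finset (Set Γ)} (hF : (F : Set (Set Γ)).Pairwise Disjoint)
    (a : Γ) (c : ℝ) (hc : 0 ≤ c) : (∑ s ∈ F, if a ∈ s then c else 0) ≤ c := by
  classical
  by_cases h : ∃ s ∈ F, a ∈ s
  · obtain ⟨s₀, hs₀F, hs₀⟩ := h
    rw [Finset.sum_eq_single s₀]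
    · rw [if_pos hs₀]
    · intro t htF hts
      rw [if_neg]
      intro hat
      exact (Set.disjoint_left.1 (hF htF hs₀F hts)) hat hs₀
    · intro h'; exact absurd hs₀F h'
  · push_neg at h
    rw [Finset.sum_eq_zero fun s hs => if_neg (h s hs)]
    exact hc

lemma abs_segSum_le (s : Set Γ) (φ : Γ →₀ ℝ) :
    |segSum s φ| ≤ ∑ a ∈ φ.support, |φ a| := by
  unfold segSum
  refine le_trans (Finset.abs_sum_le_sum_abs _ _) (Finset.sum_le_sum fun a _ => ?_)
  by_cases h : a ∈ s <;> simp [h, abs_nonneg]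

lemma sum_abs_segSum_le {F : Finset (Set Γ)} (hF : (F : Set (Set Γ)).Pairwise Disjoint)
    (φ : Γ →₀ ℝ) : (∑ s ∈ F, |segSum s φ|) ≤ ∑ a ∈ φ.support, |φ a| := by
  classical
  have h1 : ∀ s ∈ F, |segSum s φ| ≤ ∑ a ∈ φ.support, if a ∈ s then |φ a| else 0 := by
    intro s _
    unfold segSum
    refine le_trans (Finset.abs_sum_le_sum_abs _ _) (le_of_eq (Finset.sum_congr rfl fun a _ => ?_))
    by_cases h : a ∈ s <;> simp [h]
  refine le_trans (Finset.sum_le_sum h1) ?_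
  rw [Finset.sum_comm]
  refine Finset.sum_le_sum fun a _ => ?_
  exact sum_ite_mem_le hF a _ (abs_nonneg _)

lemma bddAbove_jamesSet (φ : Γ →₀ ℝ) : BddAbove (jamesSet S φ) := by
  classical
  refine ⟨∑ a ∈ φ.support, |φ a|, fun r hr => ?_⟩
  obtain ⟨F, hFS, hFd, rfl⟩ := hr
  set B := ∑ a ∈ φ.support, |φ a| with hB
  have hB0 : 0 ≤ B := Finset.sum_nonneg fun a _ => abs_nonneg _
  have h1 : (∑ s ∈ F, segSum s φ ^ 2) ≤ B ^ 2 := by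
    have h2 : ∀ s ∈ F, segSum s φ ^ 2 ≤ |segSum s φ| * B := by
      intro s hs
      have : |segSum s φ| ≤ B := le_trans (Finset.single_le_sum
        (f := fun s => |segSum s φ|) (fun t _ => abs_nonneg _) hs) (sum_abs_segSum_le hFd φ)
      calc segSum s φ ^ 2 = |segSum s φ| * |segSum s φ| := by rw [← abs_mul, sq, abs_mul_self]
      _ ≤ |segSum s φ| * B := by exact mul_le_mul_of_nonneg_left this (abs_nonneg _)
    calc (∑ s ∈ F, segSum s φ ^ 2) ≤ ∑ s ∈ F, |segSum s φ| * B := Finset.sum_le_sum h2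
    _ = (∑ s ∈ F, |segSum s φ|) * B := by rw [Finset.sum_mul]
    _ ≤ B * B := mul_le_mul_of_nonneg_right (sum_abs_segSum_le hFd φ) hB0
    _ = B ^ 2 := (sq B).symm
  calc Real.sqrt (∑ s ∈ F, segSum s φ ^ 2) ≤ Real.sqrt (B ^ 2) := Real.sqrt_le_sqrt h1
  _ = B := Real.sqrt_sq hB0

lemma jamesNorm_nonneg (φ : Γ →₀ ℝ) : 0 ≤ jamesNorm S φ :=
  le_csSup (bddAbove_jamesSet φ) (zero_mem_jamesSet φ)

lemma le_jamesNorm_of_mem {φ : Γ →₀ ℝ} {r : ℝ} (hr : r ∈ jamesSet S φ) :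
    r ≤ jamesNorm S φ := le_csSup (bddAbove_jamesSet φ) hr

lemma jamesNorm_exists_near (φ : Γ →₀ ℝ) {ε : ℝ} (hε : 0 < ε) :
    ∃ r ∈ jamesSet S φ, jamesNorm S φ - ε < r :=
  exists_lt_of_lt_csSup (jamesSet_nonempty φ) (sub_lt_self _ hε : jamesNorm S φ - ε < jamesNorm S φ)

/-- Key inequality: for a finite pairwise disjoint family in S the ℓ²-sum of the
segment sums is dominated by the square of the James norm. -/
lemma sum_sq_segSum_le_finset {F : Finset (Set Γ)} (hFS : ↑F ⊆ S)
    (hFd : (F : Set (Set Γ)).Pairwise Disjoint) (φ : Γ →₀ ℝ) :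
    (∑ s ∈ F, segSum s φ ^ 2) ≤ jamesNorm S φ ^ 2 := by
  have h0 : 0 ≤ ∑ s ∈ F, segSum s φ ^ 2 := Finset.sum_nonneg fun s _ => sq_nonneg _
  have h1 : Real.sqrt (∑ s ∈ F, segSum s φ ^ 2) ≤ jamesNorm S φ :=
    le_jamesNorm_of_mem ⟨F, hFS, hFd, rfl⟩
  calc (∑ s ∈ F, segSum s φ ^ 2) = Real.sqrt (∑ s ∈ F, segSum s φ ^ 2) ^ 2 :=
        (Real.sq_sqrt h0).symm
  _ ≤ jamesNorm S φ ^ 2 := by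
      have := Real.sqrt_nonneg (∑ s ∈ F, segSum s φ ^ 2)
      nlinarith [jamesNorm_nonneg (S := S) φ]

lemma sum_sq_segSum_le {n : ℕ} {s : Fin n → Set Γ} (hs : ∀ i, s i ∈ S)
    (hd : Pairwise (Function.onFun Disjoint s)) (φ : Γ →₀ ℝ) :
    (∑ i, segSum (s i) φ ^ 2) ≤ jamesNorm S φ ^ 2 := by
  classical
  set U : Finset (Fin n) := Finset.univ.filter (fun i => s i ≠ ∅) with hU
  have hinj : ∀ i ∈ U, ∀ j ∈ U, s i = s j → i = j := by
    intro i hi j hj hij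
    by_contra hne
    have hdisj := hd hne
    have : s i = ∅ := by
      rw [← Set.not_nonempty_iff_eq_empty]
      intro ⟨a, ha⟩
      exact Set.disjoint_left.1 hdisj ha (hij ▸ ha)
    exact (Finset.mem_filter.1 hi).2 this
  have h1 : (∑ i, segSum (s i) φ ^ 2) = ∑ i ∈ U, segSum (s i) φ ^ 2 := by
    symm
    refine Finset.sum_subset (Finset.filter_subset _ _) fun i _ hi => ?_
    have : s i = ∅ := by
      by_contra h
      exact hi (Finset.mem_filter.2 ⟨Finset.mem_univ _, h⟩)
    rw [this, segSum_empty]; ring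
  have h2 : (∑ i ∈ U, segSum (s i) φ ^ 2) = ∑ t ∈ U.image s, segSum t φ ^ 2 :=
    (Finset.sum_image (f := fun t => segSum t φ ^ 2) hinj).symm
  rw [h1, h2]
  refine sum_sq_segSum_le_finset ?_ ?_ φ
  · intro t ht
    obtain ⟨i, _, rfl⟩ := Finset.mem_image.1 ht
    exact hs i
  · intro t ht t' ht' hne
    obtain ⟨i, hi, rfl⟩ := Finset.mem_image.1 ht
    obtain ⟨j, hj, rfl⟩ := Finset.mem_image.1 ht'
    have : i ≠ j := fun h => hne (by rw [h])
    exact hd this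

/-- the value of an element of `Dset` at a point, squared, is at most `Σ l²`. -/
lemma sum_ite_sq_le {n : ℕ} (l : Fin n → ℝ) (s : Fin n → Set Γ)
    (hd : Pairwise (Function.onFun Disjoint s)) (γ : Γ) :
    (∑ i, if γ ∈ s i then l i else 0) ^ 2 ≤ ∑ i, l i ^ 2 := by
  classical
  by_cases h : ∃ i, γ ∈ s i
  · obtain ⟨i₀, hi₀⟩ := h
    have : (∑ i, if γ ∈ s i then l i else 0) = l i₀ := by
      rw [Finset.sum_eq_single i₀]
      · rw [if_pos hi₀]
      · intro j _ hj
        rw [if_neg (fun hγ => Set.disjoint_left.1 (hd hj) hγ hi₀)]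
      · intro h'; exact absurd (Finset.mem_univ _) h'
    rw [this]
    exact Finset.single_le_sum (f := fun i => l i ^ 2) (fun i _ => sq_nonneg _) (Finset.mem_univ i₀)
  · push_neg at h
    rw [Finset.sum_eq_zero fun i _ => if_neg (h i)]
    have : (0:ℝ)^2 = 0 := by norm_num
    rw [this]
    exact Finset.sum_nonneg fun i _ => sq_nonneg _

lemma abs_le_one_of_mem_Dset {d : Γ → ℝ} (hd : d ∈ Dset S) (γ : Γ) : |d γ| ≤ 1 := by
  obtain ⟨n, l, s, _, hdisj, hl, rfl⟩ := hd
  have h1 := sum_ite_sq_le l s hdisj γ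
  have h2 : (∑ i, if γ ∈ s i then l i else 0) ^ 2 ≤ 1 := le_trans h1 hl
  nlinarith [abs_nonneg (∑ i, if γ ∈ s i then l i else 0), sq_abs (∑ i, if γ ∈ s i then l i else 0)]

/-- `dPair` of an element of `Dset` expands as a weighted sum of segment sums. -/
lemma dPair_Dset_eq {n : ℕ} (l : Fin n → ℝ) (s : Fin n → Set Γ) (φ : Γ →₀ ℝ) :
    dPair (fun γ => ∑ i, if γ ∈ s i then l i else 0) φ
      = ∑ i, l i * segSum (s i) φ := by
  classical
  unfold dPair segSum
  have h1 : ∀ a, φ a * (∑ i, if a ∈ s i then l i else 0)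
      = ∑ i, (if a ∈ s i then φ a * l i else 0) := by
    intro a
    rw [Finset.mul_sum]
    exact Finset.sum_congr rfl fun i _ => by by_cases h : a ∈ s i <;> simp [h]
  simp_rw [h1]
  rw [Finset.sum_comm]
  refine Finset.sum_congr rfl fun i _ => ?_
  rw [Finset.mul_sum]
  exact Finset.sum_congr rfl fun a _ => by by_cases h : a ∈ s i <;> simp [h, mul_comm]

/-- `Dset ⊆ dualBall`. -/
lemma Dset_subset_dualBall : Dset S ⊆ dualBall S := by
  rintro d ⟨n, l, s, hsS, hdisj, hl, rfl⟩ φ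
  rw [dPair_Dset_eq]
  have hCS := Finset.sum_mul_sq_le_sq_mul_sq Finset.univ l (fun i => segSum (s i) φ)
  have h2 : (∑ i, segSum (s i) φ ^ 2) ≤ jamesNorm S φ ^ 2 := sum_sq_segSum_le hsS hdisj φ
  have h3 : (∑ i, l i * segSum (s i) φ) ^ 2 ≤ jamesNorm S φ ^ 2 := by
    calc (∑ i, l i * segSum (s i) φ) ^ 2
        ≤ (∑ i, l i ^ 2) * ∑ i, segSum (s i) φ ^ 2 := hCS
      _ ≤ 1 * jamesNorm S φ ^ 2 := by
          refine mul_le_mul hl h2 (Finset.sum_nonneg fun i _ => sq_nonneg _) zero_le_one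
      _ = jamesNorm S φ ^ 2 := one_mul _
  have h4 := jamesNorm_nonneg (S := S) φ
  nlinarith [abs_nonneg (∑ i, l i * segSum (s i) φ), sq_abs (∑ i, l i * segSum (s i) φ)]

lemma zero_mem_Dset : (fun _ => (0:ℝ)) ∈ Dset S := by
  refine ⟨0, (fun i => 0), (fun i => ∅), fun i => i.elim0, ?_, by simp, by funext γ; simp⟩
  intro i; exact i.elim0

/-- ε-attainment of the James norm on `Dset`. -/
lemma exists_Dset_near (φ : Γ →₀ ℝ) {ε : ℝ} (hε : 0 < ε) :
    ∃ d ∈ Dset S, jamesNorm S φ - ε ≤ dPair d φ := by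
  classical
  obtain ⟨r, ⟨F, hFS, hFd, rfl⟩, hr⟩ := jamesNorm_exists_near (S := S) φ hε
  set V := ∑ s ∈ F, segSum s φ ^ 2 with hV
  have hV0 : 0 ≤ V := Finset.sum_nonneg fun s _ => sq_nonneg _
  by_cases hVz : V = 0
  · refine ⟨_, zero_mem_Dset, ?_⟩
    have : dPair (fun _ => (0:ℝ)) φ = 0 := by unfold dPair; simp
    rw [this]
    have : Real.sqrt V = 0 := by rw [hVz, Real.sqrt_zero]
    linarith [hr.le, this ▸ hr.le]
  · have hVpos : 0 < V := lt_of_le_of_ne hV0 (Ne.symm hVz)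
    have hrpos : 0 < Real.sqrt V := Real.sqrt_pos.2 hVpos
    set n := F.card with hn
    set eF : Fin n ≃ {x // x ∈ F} := F.equivFin.symm with heF
    set s : Fin n → Set Γ := fun i => (eF i : Set Γ) with hs
    set l : Fin n → ℝ := fun i => segSum (s i) φ / Real.sqrt V with hl
    have hmem : ∀ i, s i ∈ S := fun i => hFS (eF i).2
    have hvalne : ∀ i j, i ≠ j → s i ≠ s j := by
      intro i j hij h
      exact hij (eF.injective (Subtype.ext h))
    have hdisj : Pairwise (Function.onFun Disjoint s) := by
      intro i j hij
      exact hFd (Finset.mem_coe.2 (eF i).2) (Finset.mem_coe.2 (eF j).2) (hvalne i j hij)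
    have hsum : ∑ i, segSum (s i) φ ^ 2 = V := by
      rw [hV, ← Finset.sum_coe_sort F (fun t => segSum t φ ^ 2)]
      exact Fintype.sum_equiv eF _ _ (fun i => rfl)
    have hlsum : ∑ i, l i ^ 2 = 1 := by
      simp only [hl, div_pow]
      rw [← Finset.sum_div, hsum, Real.sq_sqrt hV0, div_self hVz]
    refine ⟨fun γ => ∑ i, if γ ∈ s i then l i else 0,
      ⟨n, l, s, hmem, hdisj, hlsum.le, rfl⟩, ?_⟩
    rw [dPair_Dset_eq]
    have h5 : (∑ i, l i * segSum (s i) φ) = V / Real.sqrt V := by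
      have : ∀ i, l i * segSum (s i) φ = segSum (s i) φ ^ 2 / Real.sqrt V := by
        intro i; simp only [hl]; ring
      simp_rw [this]
      rw [← Finset.sum_div, hsum]
    rw [h5, Real.div_sqrt]
    linarith [hr.le]

lemma continuous_dPair (φ : Γ →₀ ℝ) : Continuous (fun g : Γ → ℝ => dPair g φ) := by
  unfold dPair
  exact continuous_finset_sum _ fun a _ => continuous_const.mul (continuous_apply a)

lemma isClosed_dualBall : IsClosed (dualBall S) := by
  have : dualBall S = ⋂ φ : Γ →₀ ℝ, {g : Γ → ℝ | |dPair g φ| ≤ jamesNorm S φ} := by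
    ext g; simp [dualBall, Set.mem_iInter]
  rw [this]
  refine isClosed_iInter fun φ => ?_
  exact isClosed_le ((continuous_dPair φ).abs) continuous_const

lemma zero_mem_dualBall : (fun _ => (0:ℝ)) ∈ dualBall S := by
  intro φ
  have : dPair (fun _ => (0:ℝ)) φ = 0 := by unfold dPair; simp
  rw [this]
  simpa using jamesNorm_nonneg (S := S) φ

lemma closure_Dset_subset_dualBall : closure (Dset S) ⊆ dualBall S :=
  closure_minimal Dset_subset_dualBall isClosed_dualBall

lemma isCompact_closure_Dset : IsCompact (closure (Dset S)) := by
  have hbox : IsCompact (Set.pi Set.univ fun _ : Γ => Set.Icc (-1:ℝ) 1) :=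
    isCompact_univ_pi fun _ => isCompact_Icc
  refine hbox.of_isClosed_subset isClosed_closure ?_
  refine closure_minimal ?_ (isClosed_set_pi fun γ _ => isClosed_Icc)
  intro d hd γ _
  have := abs_le_one_of_mem_Dset hd γ
  rw [abs_le] at this
  exact ⟨this.1, this.2⟩

lemma closure_Dset_nonempty : (closure (Dset S)).Nonempty :=
  ⟨_, subset_closure zero_mem_Dset⟩

end JSAux


namespace JSAux

variable {Γ : Type*}

/-- A sequence uniformly approximable by Cauchy sequences is Cauchy. -/
lemma cauchy_approx {P : ℕ → ℝ}
    (h : ∀ ε : ℝ, 0 < ε → ∃ q : ℕ → ℝ, CauchySeq q ∧ ∀ m, |P m - q m| ≤ ε) :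
    CauchySeq P := by
  rw [Metric.cauchySeq_iff]
  intro ε hε
  obtain ⟨q, hq, hqP⟩ := h (ε/4) (by linarith)
  rw [Metric.cauchySeq_iff] at hq
  obtain ⟨N, hN⟩ := hq (ε/4) (by linarith)
  refine ⟨N, fun m hm n hn => ?_⟩
  have h1 := hqP m
  have h2 := hqP n
  have h3 := hN m hm n hn
  rw [Real.dist_eq] at *
  have e1 : P m - P n = (P m - q m) + (q m - q n) + (q n - P n) := by ring
  rw [e1]
  have e2 : |(P m - q m) + (q m - q n) + (q n - P n)|
      ≤ |P m - q m| + |q m - q n| + |q n - P n| :=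
    le_trans (abs_add_le _ _) (by linarith [abs_add_le (P m - q m) (q m - q n)])
  have e3 : |q n - P n| = |P n - q n| := abs_sub_comm _ _
  linarith

/-- **Main combinatorial lemma**: every element of the closure of `Dset S` pairs
Cauchy-ly with the sequence `x`. -/
lemma cauchy_on_closure {S : Set (Set Γ)} (hclosed : IsClosed (indicatorFun '' S))
    (x : ℕ → Γ →₀ ℝ) (Cb : ℝ) (hb : ∀ n, jamesNorm S (x n) ≤ Cb)
    (hc : ∀ s ∈ S, CauchySeq fun n => segSum s (x n)) :
    ∀ e ∈ closure (Dset S), CauchySeq fun m => dPair e (x m) := by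
  classical
  have hCb0 : 0 ≤ Cb := le_trans (jamesNorm_nonneg (S := S) (x 0)) (hb 0)
  intro e he
  obtain ⟨𝒰, hDU, hUe⟩ := mem_closure_iff_ultrafilter.1 he
  have hev : ∀ γ : Γ, Tendsto (fun d : Γ → ℝ => d γ) ↑𝒰 (𝓝 (e γ)) := by
    intro γ
    exact ((continuous_apply γ).tendsto e).mono_left hUe
  -- witnesses for membership in Dset
  have hwit : ∀ d : Γ → ℝ, ∃ (n : ℕ) (l : Fin n → ℝ) (s : Fin n → Set Γ),
      d ∈ Dset S → (∀ i, s i ∈ S) ∧ Pairwise (Function.onFun Disjoint s) ∧ (∑ i, l i ^ 2) ≤ 1 ∧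
        d = fun γ => ∑ i, if γ ∈ s i then l i else 0 := by
    intro d
    by_cases h : d ∈ Dset S
    · obtain ⟨n, l, s, h1, h2, h3, h4⟩ := h
      exact ⟨n, l, s, fun _ => ⟨h1, h2, h3, h4⟩⟩
    · exact ⟨0, fun _ => 0, fun _ => ∅, fun h' => absurd h' h⟩
  choose wN wL wS hw using hwit
  have hSmem : ∀ d ∈ Dset S, ∀ i, wS d i ∈ S := fun d hd => (hw d hd).1
  have hdisj : ∀ d ∈ Dset S, Pairwise (Function.onFun Disjoint (wS d)) := fun d hd => (hw d hd).2.1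
  have hlsq : ∀ d ∈ Dset S, (∑ i, wL d i ^ 2) ≤ 1 := fun d hd => (hw d hd).2.2.1
  have hrepr : ∀ d ∈ Dset S, d = fun γ => ∑ i, if γ ∈ wS d i then wL d i else 0 :=
    fun d hd => (hw d hd).2.2.2
  -- the member of the family of d containing γ (or ∅)
  set SetAt : (Γ → ℝ) → Γ → Set Γ :=
    fun d γ => {γ' | ∃ i, γ ∈ wS d i ∧ γ' ∈ wS d i} with hSetAtDef
  have hmem_SetAt : ∀ d γ γ'', γ'' ∈ SetAt d γ ↔ ∃ i, γ ∈ wS d i ∧ γ'' ∈ wS d i := by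
    intro d γ γ''; rw [hSetAtDef]; exact Iff.rfl
  have hSetAt_eq : ∀ d ∈ Dset S, ∀ γ i, γ ∈ wS d i → SetAt d γ = wS d i := by
    intro d hd γ i hγ
    apply Set.eq_of_subset_of_subset
    · intro γ' hγ'
      obtain ⟨j, hγj, hγ'j⟩ := (hmem_SetAt d γ γ').1 hγ'
      have : j = i := by
        by_contra hne
        exact Set.disjoint_left.1 (hdisj d hd hne) hγj hγ
      exact this ▸ hγ'j
    · intro γ' hγ'
      exact (hmem_SetAt d γ γ').2 ⟨i, hγ, hγ'⟩
  have hval : ∀ d ∈ Dset S, ∀ γ i, γ ∈ wS d i → d γ = wL d i := by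
    intro d hd γ i hγ
    have hvald : d γ = ∑ i, if γ ∈ wS d i then wL d i else 0 := congrFun (hrepr d hd) γ
    rw [hvald, Finset.sum_eq_single i]
    · rw [if_pos hγ]
    · intro j _ hj
      exact if_neg (fun h => Set.disjoint_left.1 (hdisj d hd hj) h hγ)
    · intro h; exact absurd (Finset.mem_univ _) h
  have hval0 : ∀ d ∈ Dset S, ∀ γ, (∀ i, γ ∉ wS d i) → d γ = 0 := by
    intro d hd γ h
    have hvald : d γ = ∑ i, if γ ∈ wS d i then wL d i else 0 := congrFun (hrepr d hd) γ
    rw [hvald]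
    exact Finset.sum_eq_zero fun i _ => if_neg (h i)
  -- covering event
  set Cov : Γ → Set (Γ → ℝ) := fun γ => {d | ∃ i, γ ∈ wS d i} with hCovDef
  -- the equivalence relation
  set Req : Γ → Γ → Prop := fun γ γ' => {d | SetAt d γ = SetAt d γ'} ∈ 𝒰 with hReqDef
  have hReq_mem : ∀ γ γ', Req γ γ' ↔ {d | SetAt d γ = SetAt d γ'} ∈ 𝒰 := by
    intro γ γ'; rw [hReqDef]
  have hreq_equiv : Equivalence Req := by
    constructor
    · intro γ
      rw [hReq_mem]
      exact Filter.univ_mem' fun d => rfl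
    · intro γ γ' h
      rw [hReq_mem] at h ⊢
      exact Filter.mem_of_superset h fun d hd => Eq.symm hd
    · intro a b c h1 h2
      rw [hReq_mem] at h1 h2 ⊢
      exact Filter.mem_of_superset (Filter.inter_mem h1 h2) fun d hd => hd.1.trans hd.2
  let sd : Setoid Γ := ⟨Req, hreq_equiv⟩
  set rep : Γ → Γ := fun γ => (Quotient.mk sd γ).out with hrepDef
  have hrep_req : ∀ γ, Req γ (rep γ) := fun γ => hreq_equiv.symm (Quotient.mk_out γ)
  have hrep_eq : ∀ γ γ', Req γ γ' → rep γ = rep γ' := by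
    intro γ γ' h
    have h2 : (Quotient.mk sd γ) = (Quotient.mk sd γ') := Quotient.sound h
    rw [hrepDef]
    simp only [h2]
  have hrep_idem : ∀ γ, rep (rep γ) = rep γ :=
    fun γ => hrep_eq _ _ (hreq_equiv.symm (hrep_req γ))
  -- F1 : equivalent points have equal e-values
  have heq_val : ∀ γ γ', Req γ γ' → e γ = e γ' := by
    intro γ γ' h
    rw [hReq_mem] at h
    refine tendsto_nhds_unique ((hev γ).congr' ?_) (hev γ')
    refine Filter.eventuallyEq_of_mem (Filter.inter_mem h hDU) ?_
    rintro d ⟨hd1, hd2⟩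
    by_cases hcov : ∃ i, γ ∈ wS d i
    · obtain ⟨i, hi⟩ := hcov
      have h1 : SetAt d γ = wS d i := hSetAt_eq d hd2 γ i hi
      have h2 : SetAt d γ' = wS d i := by rw [← hd1, h1]
      have hγ'cov : ∃ j, γ' ∈ wS d j := by
        have hne : (SetAt d γ').Nonempty := ⟨γ, by rw [h2]; exact hi⟩
        obtain ⟨z, hz⟩ := hne
        obtain ⟨j, hj1, _⟩ := (hmem_SetAt d γ' z).1 hz
        exact ⟨j, hj1⟩
      obtain ⟨j, hj⟩ := hγ'cov
      have h3 : SetAt d γ' = wS d j := hSetAt_eq d hd2 γ' j hj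
      have hij : wS d i = wS d j := by rw [← h2, h3]
      have hijeq : i = j := by
        by_contra hne
        exact Set.disjoint_left.1 (hdisj d hd2 hne) hi (hij ▸ hi)
      show d γ = d γ'
      rw [hval d hd2 γ i hi, hval d hd2 γ' j hj, hijeq]
    · push_neg at hcov
      have h1 : SetAt d γ = ∅ := by
        rw [Set.eq_empty_iff_forall_notMem]
        intro z hz
        obtain ⟨i, hγi, _⟩ := (hmem_SetAt d γ z).1 hz
        exact hcov i hγi
      have h2 : ∀ j, γ' ∉ wS d j := by
        intro j hj
        have : γ' ∈ SetAt d γ' := (hmem_SetAt d γ' γ').2 ⟨j, hj, hj⟩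
        rw [← hd1, h1] at this
        exact this
      show d γ = d γ'
      rw [hval0 d hd2 γ hcov, hval0 d hd2 γ' h2]
  -- F0 : value at non-covered points
  have hzero : ∀ γ, Cov γ ∉ 𝒰 → e γ = 0 := by
    intro γ h
    have hcc : (Cov γ)ᶜ ∈ 𝒰 := Ultrafilter.compl_mem_iff_notMem.2 h
    refine tendsto_nhds_unique (hev γ) ?_
    have h0 : (fun d : Γ → ℝ => d γ) =ᶠ[↑𝒰] (fun _ => (0:ℝ)) := by
      refine Filter.eventuallyEq_of_mem (Filter.inter_mem hcc hDU) ?_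
      rintro d ⟨hd1, hd2⟩
      refine hval0 d hd2 γ fun i hi => ?_
      exact hd1 ⟨i, hi⟩
    exact (tendsto_congr' h0).2 tendsto_const_nhds
  -- compactness of the family of indicators
  have hKcompact : IsCompact (indicatorFun '' S) := by
    have hbox : IsCompact (Set.pi Set.univ fun _ : Γ => ({0,1} : Set ℝ)) :=
      isCompact_univ_pi fun _ => ((Set.finite_singleton (1:ℝ)).insert 0).isCompact
    refine hbox.of_isClosed_subset hclosed ?_
    rintro f ⟨s, _, rfl⟩ γ _
    by_cases h : γ ∈ s <;> simp [indicatorFun, Set.indicator_apply, h]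
  -- limit sets
  have hulim : ∀ γ, ∃ t : Set Γ, Cov γ ∈ 𝒰 →
      t ∈ S ∧ Tendsto (fun d => indicatorFun (SetAt d γ)) ↑𝒰 (𝓝 (indicatorFun t)) := by
    intro γ
    by_cases h : Cov γ ∈ 𝒰
    · have hmem : ↑(𝒰.map (fun d => indicatorFun (SetAt d γ))) ≤ 𝓟 (indicatorFun '' S) := by
        rw [le_principal_iff, Ultrafilter.coe_map, Filter.mem_map]
        refine Filter.mem_of_superset (Filter.inter_mem h hDU) ?_
        rintro d ⟨hd1, hd2⟩
        obtain ⟨i, hi⟩ := hd1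
        rw [Set.mem_preimage, hSetAt_eq d hd2 γ i hi]
        exact ⟨wS d i, hSmem d hd2 i, rfl⟩
      obtain ⟨f, hfK, hflim⟩ := hKcompact.ultrafilter_le_nhds _ hmem
      obtain ⟨t, htS, rfl⟩ := hfK
      refine ⟨t, fun _ => ⟨htS, ?_⟩⟩
      rwa [Ultrafilter.coe_map] at hflim
    · exact ⟨∅, fun h' => absurd h' h⟩
  choose u hu using hulim
  -- membership in the limit sets
  have hmem_u : ∀ γ, Cov γ ∈ 𝒰 → ∀ a, (a ∈ u γ ↔ {d | a ∈ SetAt d γ} ∈ 𝒰) := by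
    intro γ hγ a
    have htend : Tendsto (fun d => indicatorFun (SetAt d γ) a) ↑𝒰 (𝓝 (indicatorFun (u γ) a)) :=
      ((continuous_apply a).tendsto _).comp ((hu γ hγ).2)
    constructor
    · intro ha
      have h1 : indicatorFun (u γ) a = 1 := by
        simp [indicatorFun, Set.indicator_apply, ha]
      have h3 : {d | indicatorFun (SetAt d γ) a ∈ Set.Ioi (1/2:ℝ)} ∈ 𝒰 := by
        refine htend ?_
        rw [h1]
        exact Ioi_mem_nhds (by norm_num)
      refine Filter.mem_of_superset h3 ?_
      intro d hd
      simp only [Set.mem_setOf_eq, Set.mem_Ioi] at hd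
      by_contra hna
      simp only [Set.mem_setOf_eq] at hna
      rw [show indicatorFun (SetAt d γ) a = 0 by
        simp [indicatorFun, Set.indicator_apply, hna]] at hd
      norm_num at hd
    · intro hd
      by_contra hna
      have h1 : indicatorFun (u γ) a = 0 := by
        simp [indicatorFun, Set.indicator_apply, hna]
      have h3 : {d | indicatorFun (SetAt d γ) a ∈ Set.Iio (1/2:ℝ)} ∈ 𝒰 := by
        refine htend ?_
        rw [h1]
        exact Iio_mem_nhds (by norm_num)
      obtain ⟨d, hd1, hd2⟩ := Ultrafilter.nonempty_of_mem (Filter.inter_mem h3 hd)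
      simp only [Set.mem_setOf_eq, Set.mem_Iio] at hd1
      simp only [Set.mem_setOf_eq] at hd2
      rw [show indicatorFun (SetAt d γ) a = 1 by
        simp [indicatorFun, Set.indicator_apply, hd2]] at hd1
      norm_num at hd1
  -- F2b : membership in u γ is equivalence with γ
  have hmem_u_iff : ∀ γ, Cov γ ∈ 𝒰 → ∀ a, (a ∈ u γ ↔ Req a γ) := by
    intro γ hγ a
    rw [hmem_u γ hγ a, hReq_mem]
    constructor
    · intro h
      refine Filter.mem_of_superset (Filter.inter_mem h hDU) ?_
      rintro d ⟨hd1, hd2⟩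
      obtain ⟨i, hγi, hai⟩ := (hmem_SetAt d γ a).1 hd1
      show SetAt d a = SetAt d γ
      rw [hSetAt_eq d hd2 a i hai, hSetAt_eq d hd2 γ i hγi]
    · intro h
      refine Filter.mem_of_superset (Filter.inter_mem (Filter.inter_mem h hγ) hDU) ?_
      rintro d ⟨⟨hd1, hd2⟩, hd3⟩
      obtain ⟨i, hγi⟩ := hd2
      have h1 : SetAt d γ = wS d i := hSetAt_eq d hd3 γ i hγi
      have hmem : a ∈ SetAt d a := by
        have hne : (SetAt d a).Nonempty := ⟨γ, by rw [hd1, h1]; exact hγi⟩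
        obtain ⟨z, hz⟩ := hne
        obtain ⟨j, haj, _⟩ := (hmem_SetAt d a z).1 hz
        exact (hmem_SetAt d a a).2 ⟨j, haj, haj⟩
      show a ∈ SetAt d γ
      rw [← hd1]
      exact hmem
  -- F3 : square-summability of e over inequivalent covered representatives
  have hsum_sq_e : ∀ R : Finset Γ, (∀ r ∈ R, Cov r ∈ 𝒰) →
      (∀ r ∈ R, ∀ r' ∈ R, r ≠ r' → ¬ Req r r') → (∑ r ∈ R, (e r)^2) ≤ 1 := by
    intro R hRcov hRne
    have hEU : {d | d ∈ Dset S ∧ (∀ r ∈ R, ∃ i, r ∈ wS d i) ∧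
        (∀ r ∈ R, ∀ r' ∈ R, r ≠ r' → SetAt d r ≠ SetAt d r')} ∈ 𝒰 := by
      have h1 : (⋂ r ∈ R, Cov r) ∈ 𝒰 := (Filter.biInter_finset_mem _).2 hRcov
      have h2 : (⋂ r ∈ R, ⋂ r' ∈ R, {d | r ≠ r' → SetAt d r ≠ SetAt d r'}) ∈ 𝒰 := by
        refine (Filter.biInter_finset_mem _).2 fun r hr => ?_
        refine (Filter.biInter_finset_mem _).2 fun r' hr' => ?_
        by_cases hrr : r = r'
        · exact Filter.univ_mem' fun d hne => absurd hrr hne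
        · have hnr : ¬ Req r r' := hRne r hr r' hr' hrr
          rw [hReq_mem] at hnr
          have hcompl : {d | SetAt d r = SetAt d r'}ᶜ ∈ 𝒰 :=
            Ultrafilter.compl_mem_iff_notMem.2 hnr
          exact Filter.mem_of_superset hcompl fun d hd _ => hd
      refine Filter.mem_of_superset (Filter.inter_mem hDU (Filter.inter_mem h1 h2)) ?_
      rintro d ⟨hd1, hd2, hd3⟩
      refine ⟨hd1, fun r hr => Set.mem_iInter₂.1 hd2 r hr, fun r hr r' hr' hne => ?_⟩
      exact (Set.mem_iInter₂.1 (Set.mem_iInter₂.1 hd3 r hr) r' hr') hne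
    have key : ∀ d ∈ {d | d ∈ Dset S ∧ (∀ r ∈ R, ∃ i, r ∈ wS d i) ∧
        (∀ r ∈ R, ∀ r' ∈ R, r ≠ r' → SetAt d r ≠ SetAt d r')}, (∑ r ∈ R, (d r)^2) ≤ 1 := by
      rintro d ⟨hdD, hdcov, hdne⟩
      rcases R.eq_empty_or_nonempty with rfl | ⟨r₀, hr₀⟩
      · simp
      · obtain ⟨i₀, _⟩ := hdcov r₀ hr₀
        have hidx' : ∀ r, ∃ i : Fin (wN d), r ∈ R → r ∈ wS d i := by
          intro r
          by_cases hr : r ∈ R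
          · obtain ⟨i, hi⟩ := hdcov r hr; exact ⟨i, fun _ => hi⟩
          · exact ⟨i₀, fun h => absurd h hr⟩
        choose idx hidx2 using hidx'
        have hinj : ∀ r ∈ R, ∀ r' ∈ R, idx r = idx r' → r = r' := by
          intro r hr r' hr' heq
          by_contra hne
          refine hdne r hr r' hr' hne ?_
          rw [hSetAt_eq d hdD r _ (hidx2 r hr), hSetAt_eq d hdD r' _ (hidx2 r' hr'), heq]
        calc ∑ r ∈ R, (d r)^2 = ∑ r ∈ R, (wL d (idx r))^2 :=
              Finset.sum_congr rfl fun r hr => by rw [hval d hdD r _ (hidx2 r hr)]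
        _ = ∑ i ∈ R.image idx, (wL d i)^2 :=
              (Finset.sum_image (f := fun i => (wL d i)^2) hinj).symm
        _ ≤ ∑ i, (wL d i)^2 :=
              Finset.sum_le_sum_of_subset_of_nonneg (Finset.subset_univ _)
                (fun i _ _ => sq_nonneg _)
        _ ≤ 1 := hlsq d hdD
    have htends : Tendsto (fun d : Γ → ℝ => ∑ r ∈ R, (d r)^2) ↑𝒰 (𝓝 (∑ r ∈ R, (e r)^2)) :=
      tendsto_finset_sum _ fun r _ => (hev r).pow 2
    exact le_of_tendsto htends (Filter.eventually_of_mem hEU key)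
  -- F4 : uniform bound on the ℓ²-sums of the limit segment sums
  have hsum_sq_seg : ∀ R : Finset Γ, (∀ r ∈ R, Cov r ∈ 𝒰) →
      (∀ r ∈ R, ∀ r' ∈ R, r ≠ r' → ¬ Req r r') → ∀ m,
      (∑ r ∈ R, segSum (u r) (x m) ^ 2) ≤ Cb ^ 2 := by
    intro R hRcov hRne m
    have htr : ∀ r ∈ R, ∀ a ∈ (x m).support, {d | a ∈ SetAt d r ↔ a ∈ u r} ∈ 𝒰 := by
      intro r hr a _
      by_cases ha : a ∈ u r
      · have h := (hmem_u r (hRcov r hr) a).1 ha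
        exact Filter.mem_of_superset h fun d hd => ⟨fun _ => ha, fun _ => hd⟩
      · have h : {d | a ∈ SetAt d r} ∉ 𝒰 := fun h => ha ((hmem_u r (hRcov r hr) a).2 h)
        have h2 := Ultrafilter.compl_mem_iff_notMem.2 h
        exact Filter.mem_of_superset h2 fun d hd => ⟨fun h' => absurd h' hd, fun h' => absurd h' ha⟩
    have hEU : {d | d ∈ Dset S ∧ (∀ r ∈ R, ∃ i, r ∈ wS d i) ∧
        (∀ r ∈ R, ∀ r' ∈ R, r ≠ r' → SetAt d r ≠ SetAt d r') ∧
        (∀ r ∈ R, ∀ a ∈ (x m).support, (a ∈ SetAt d r ↔ a ∈ u r))} ∈ 𝒰 := by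
      have h1 : (⋂ r ∈ R, Cov r) ∈ 𝒰 := (Filter.biInter_finset_mem _).2 hRcov
      have h2 : (⋂ r ∈ R, ⋂ r' ∈ R, {d | r ≠ r' → SetAt d r ≠ SetAt d r'}) ∈ 𝒰 := by
        refine (Filter.biInter_finset_mem _).2 fun r hr => ?_
        refine (Filter.biInter_finset_mem _).2 fun r' hr' => ?_
        by_cases hrr : r = r'
        · exact Filter.univ_mem' fun d hne => absurd hrr hne
        · have hnr : ¬ Req r r' := hRne r hr r' hr' hrr
          rw [hReq_mem] at hnr
          exact Filter.mem_of_superset (Ultrafilter.compl_mem_iff_notMem.2 hnr)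
            fun d hd _ => hd
      have h3 : (⋂ r ∈ R, ⋂ a ∈ (x m).support, {d | a ∈ SetAt d r ↔ a ∈ u r}) ∈ 𝒰 := by
        refine (Filter.biInter_finset_mem _).2 fun r hr => ?_
        exact (Filter.biInter_finset_mem _).2 fun a ha => htr r hr a ha
      refine Filter.mem_of_superset
        (Filter.inter_mem hDU (Filter.inter_mem h1 (Filter.inter_mem h2 h3))) ?_
      rintro d ⟨hd1, hd2, hd3, hd4⟩
      refine ⟨hd1, fun r hr => Set.mem_iInter₂.1 hd2 r hr,
        fun r hr r' hr' hne => (Set.mem_iInter₂.1 (Set.mem_iInter₂.1 hd3 r hr) r' hr') hne,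
        fun r hr a ha => Set.mem_iInter₂.1 (Set.mem_iInter₂.1 hd4 r hr) a ha⟩
    obtain ⟨d, hdD, hdcov, hdne, hdtr⟩ := Ultrafilter.nonempty_of_mem hEU
    have hseg : ∀ r ∈ R, segSum (u r) (x m) = segSum (SetAt d r) (x m) := by
      intro r hr
      exact segSum_congr (x m) fun a ha => (hdtr r hr a ha).symm
    have hinj : ∀ r ∈ R, ∀ r' ∈ R, SetAt d r = SetAt d r' → r = r' := by
      intro r hr r' hr' h
      by_contra hne
      exact hdne r hr r' hr' hne h
    calc ∑ r ∈ R, segSum (u r) (x m) ^ 2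
        = ∑ r ∈ R, segSum (SetAt d r) (x m) ^ 2 :=
          Finset.sum_congr rfl fun r hr => by rw [hseg r hr]
    _ = ∑ t ∈ R.image (fun r => SetAt d r), segSum t (x m) ^ 2 :=
          (Finset.sum_image (f := fun t => segSum t (x m) ^ 2) hinj).symm
    _ ≤ jamesNorm S (x m) ^ 2 := by
          refine sum_sq_segSum_le_finset ?_ ?_ (x m)
          · intro t ht
            obtain ⟨r, hr, rfl⟩ := Finset.mem_image.1 ht
            obtain ⟨i, hi⟩ := hdcov r hr
            rw [hSetAt_eq d hdD r i hi]
            exact hSmem d hdD i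
          · intro t ht t' ht' hne
            obtain ⟨r, hr, rfl⟩ := Finset.mem_image.1 (Finset.mem_coe.1 ht)
            obtain ⟨r', hr', rfl⟩ := Finset.mem_image.1 (Finset.mem_coe.1 ht')
            obtain ⟨i, hi⟩ := hdcov r hr
            obtain ⟨i', hi'⟩ := hdcov r' hr'
            rw [hSetAt_eq d hdD r i hi] at hne ⊢
            rw [hSetAt_eq d hdD r' i' hi'] at hne ⊢
            have : i ≠ i' := fun h => hne (by rw [h])
            exact hdisj d hdD this
    _ ≤ Cb ^ 2 := by nlinarith [hb m, jamesNorm_nonneg (S := S) (x m)]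
  -- F5 : the decomposition identity
  have hkey : ∀ (m : ℕ) (R : Finset Γ),
      (∀ r ∈ R, rep r = r) → (∀ r ∈ R, Cov r ∈ 𝒰) →
      (∀ a ∈ (x m).support, Cov (rep a) ∈ 𝒰 → rep a ∈ R) →
      dPair e (x m) = ∑ r ∈ R, e r * segSum (u r) (x m) := by
    intro m R hRrep hRcov hRin
    have hstep1 : ∀ r ∈ R, e r * segSum (u r) (x m)
        = ∑ a ∈ (x m).support, (if a ∈ u r then (x m) a * e r else 0) := by
      intro r _
      rw [segSum, Finset.mul_sum]
      refine Finset.sum_congr rfl fun a _ => ?_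
      by_cases h : a ∈ u r
      · rw [if_pos h, if_pos h]; ring
      · rw [if_neg h, if_neg h]; ring
    have hpt : ∀ a ∈ (x m).support,
        (∑ r ∈ R, if a ∈ u r then (x m) a * e r else 0) = (x m) a * e a := by
      intro a ha
      by_cases hcova : Cov (rep a) ∈ 𝒰
      · have hmem : a ∈ u (rep a) := (hmem_u_iff (rep a) hcova a).2 (hrep_req a)
        have hin : rep a ∈ R := hRin a ha hcova
        rw [Finset.sum_eq_single (rep a)]
        · rw [if_pos hmem, heq_val a (rep a) (hrep_req a)]
        · intro r hr hne
          refine if_neg fun hmem' => ?_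
          have h1 : Req a r := (hmem_u_iff r (hRcov r hr) a).1 hmem'
          have h2 : rep a = r := by rw [hrep_eq a r h1, hRrep r hr]
          exact hne (h2 ▸ rfl)
        · intro h; exact absurd hin h
      · have h0 : ∀ r ∈ R, ¬ (a ∈ u r) := by
          intro r hr hmem'
          have h1 : Req a r := (hmem_u_iff r (hRcov r hr) a).1 hmem'
          have h2 : rep a = r := by rw [hrep_eq a r h1, hRrep r hr]
          rw [h2] at hcova
          exact hcova (hRcov r hr)
        rw [Finset.sum_eq_zero fun r hr => if_neg (h0 r hr)]
        rw [heq_val a (rep a) (hrep_req a), hzero (rep a) hcova]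
        ring
    calc dPair e (x m) = ∑ a ∈ (x m).support, (x m) a * e a := rfl
    _ = ∑ a ∈ (x m).support, ∑ r ∈ R, (if a ∈ u r then (x m) a * e r else 0) :=
        Finset.sum_congr rfl fun a ha => (hpt a ha).symm
    _ = ∑ r ∈ R, ∑ a ∈ (x m).support, (if a ∈ u r then (x m) a * e r else 0) :=
        Finset.sum_comm
    _ = ∑ r ∈ R, e r * segSum (u r) (x m) :=
        Finset.sum_congr rfl fun r hr => (hstep1 r hr).symm
  -- F6 : assembly
  have hΓ₀ : (⋃ m, ((x m).support : Set Γ)).Countable :=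
    Set.countable_iUnion fun m => ((x m).support.countable_toSet)
  set CR : Set Γ := (rep '' (⋃ m, ((x m).support : Set Γ))) ∩ {r | Cov r ∈ 𝒰} with hCRdef
  have hCRrep : ∀ r ∈ CR, rep r = r := by
    rintro r ⟨⟨a, _, rfl⟩, _⟩
    exact hrep_idem a
  have hCRcov : ∀ r ∈ CR, Cov r ∈ 𝒰 := fun r hr => hr.2
  have hCRne : ∀ r ∈ CR, ∀ r' ∈ CR, r ≠ r' → ¬ Req r r' := by
    intro r hr r' hr' hne h
    exact hne (by rw [← hCRrep r hr, ← hCRrep r' hr']; exact hrep_eq r r' h)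
  set VSet : Set ℝ := {v | ∃ R : Finset Γ, ↑R ⊆ CR ∧ v = ∑ r ∈ R, (e r)^2} with hVdef
  have hVne : VSet.Nonempty := ⟨0, ∅, by simp, by simp⟩
  have hVbdd : BddAbove VSet := by
    refine ⟨1, ?_⟩
    rintro v ⟨R, hR, rfl⟩
    exact hsum_sq_e R (fun r hr => hCRcov r (hR hr))
      (fun r hr r' hr' hne => hCRne r (hR hr) r' (hR hr') hne)
  refine cauchy_approx fun ε hε => ?_
  set δ : ℝ := ε / (Cb + 1) with hδdef
  have hδ : 0 < δ := div_pos hε (by linarith)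
  obtain ⟨v, ⟨R₀, hR₀sub, rfl⟩, hv⟩ :=
    exists_lt_of_lt_csSup hVne (show sSup VSet - δ^2 < sSup VSet by nlinarith)
  have htail : ∀ R₁ : Finset Γ, ↑R₁ ⊆ CR → (∀ r ∈ R₁, r ∉ R₀) →
      (∑ r ∈ R₁, (e r)^2) ≤ δ^2 := by
    intro R₁ hR₁ hd
    have hun : (∑ r ∈ R₀ ∪ R₁, (e r)^2) ≤ sSup VSet := by
      refine le_csSup hVbdd ⟨R₀ ∪ R₁, ?_, rfl⟩
      rw [Finset.coe_union]
      exact Set.union_subset hR₀sub hR₁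
    rw [Finset.sum_union (Finset.disjoint_right.2 hd)] at hun
    linarith
  -- the approximating Cauchy sequence
  have hLex : ∀ r : Γ, ∃ L : ℝ, r ∈ R₀ →
      Tendsto (fun m => segSum (u r) (x m)) atTop (𝓝 L) := by
    intro r
    by_cases hr : r ∈ R₀
    · have hrS : u r ∈ S := (hu r (hCRcov r (hR₀sub hr))).1
      obtain ⟨L, hL⟩ := cauchySeq_tendsto_of_complete (hc _ hrS)
      exact ⟨L, fun _ => hL⟩
    · exact ⟨0, fun h => absurd h hr⟩
  choose L hL using hLex
  refine ⟨fun m => ∑ r ∈ R₀, e r * segSum (u r) (x m), ?_, ?_⟩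
  · refine Filter.Tendsto.cauchySeq (x := ∑ r ∈ R₀, e r * L r) ?_
    exact tendsto_finset_sum _ fun r hr => (hL r hr).const_mul (e r)
  · intro m
    set Qm : Finset Γ := ((x m).support.image rep).filter (fun r => Cov r ∈ 𝒰) with hQmdef
    have hQmCR : ↑Qm ⊆ CR := by
      intro r hr
      obtain ⟨hr1, hr2⟩ := Finset.mem_filter.1 (Finset.mem_coe.1 hr)
      obtain ⟨a, ha, rfl⟩ := Finset.mem_image.1 hr1
      exact ⟨⟨a, Set.mem_iUnion.2 ⟨m, ha⟩, rfl⟩, hr2⟩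
    set R : Finset Γ := R₀ ∪ Qm with hRdef
    have hRCR : ↑R ⊆ CR := by
      rw [hRdef, Finset.coe_union]
      exact Set.union_subset hR₀sub hQmCR
    have hkeyR := hkey m R (fun r hr => hCRrep r (hRCR hr)) (fun r hr => hCRcov r (hRCR hr))
      (fun a ha hcov => Finset.mem_union_right _
        (Finset.mem_filter.2 ⟨Finset.mem_image.2 ⟨a, ha, rfl⟩, hcov⟩))
    have hsub : R₀ ⊆ R := Finset.subset_union_left
    have hsplit : dPair e (x m) - (∑ r ∈ R₀, e r * segSum (u r) (x m))
        = ∑ r ∈ R \ R₀, e r * segSum (u r) (x m) := by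
      rw [hkeyR, ← Finset.sum_sdiff hsub]
      ring
    rw [hsplit]
    have hRsd : ↑(R \ R₀) ⊆ CR := fun r hr => hRCR (Finset.sdiff_subset (Finset.mem_coe.1 hr))
    have h1 : (∑ r ∈ R \ R₀, (e r)^2) ≤ δ^2 :=
      htail _ hRsd fun r hr => (Finset.mem_sdiff.1 hr).2
    have h2 : (∑ r ∈ R \ R₀, segSum (u r) (x m)^2) ≤ Cb^2 :=
      hsum_sq_seg _ (fun r hr => hCRcov r (hRsd hr))
        (fun r hr r' hr' hne => hCRne r (hRsd hr) r' (hRsd hr') hne) m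
    have hCS := Finset.sum_mul_sq_le_sq_mul_sq (R \ R₀) (fun r => e r)
      (fun r => segSum (u r) (x m))
    have h3 : (∑ r ∈ R \ R₀, e r * segSum (u r) (x m))^2 ≤ (δ * Cb)^2 := by
      calc (∑ r ∈ R \ R₀, e r * segSum (u r) (x m))^2
          ≤ (∑ r ∈ R \ R₀, (e r)^2) * (∑ r ∈ R \ R₀, segSum (u r) (x m)^2) := hCS
      _ ≤ δ^2 * Cb^2 := by
          refine mul_le_mul h1 h2 (Finset.sum_nonneg fun r _ => sq_nonneg _) (sq_nonneg _)
      _ = (δ * Cb)^2 := by ring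
    have h4 : |∑ r ∈ R \ R₀, e r * segSum (u r) (x m)| ≤ δ * Cb := by
      have h5 : 0 ≤ δ * Cb := mul_nonneg hδ.le hCb0
      nlinarith [abs_nonneg (∑ r ∈ R \ R₀, e r * segSum (u r) (x m)),
        sq_abs (∑ r ∈ R \ R₀, e r * segSum (u r) (x m))]
    refine le_trans h4 ?_
    rw [hδdef]
    rw [div_mul_eq_mul_div, div_le_iff₀ (by linarith : (0:ℝ) < Cb + 1)]
    nlinarith
end JSAux


namespace JSAux

variable {Γ : Type*}

/-- convex coefficients supported on `[k, ∞)`. -/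
def IsCoef (k : ℕ) (c : ℕ → ℝ) : Prop :=
  (∀ n, 0 ≤ c n) ∧ (∀ n < k, c n = 0) ∧ HasSum c 1

/-- the function `ω ↦ Σ' c n · ⟨ω, y n⟩`. -/
noncomputable def wfun (y : ℕ → Γ →₀ ℝ) (c : ℕ → ℝ) (ω : Γ → ℝ) : ℝ :=
  ∑' n, c n * dPair ω (y n)

/-- sup of a functional over the dual ball. -/
noncomputable def Msup (S : Set (Set Γ)) (F : (Γ → ℝ) → ℝ) : ℝ :=
  sSup (F '' dualBall S)

lemma IsCoef.coef_le_one {k : ℕ} {c : ℕ → ℝ} (h : IsCoef k c) (n : ℕ) : c n ≤ 1 :=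
  le_hasSum h.2.2 n fun j _ => h.1 j

lemma IsCoef.pure (k : ℕ) : IsCoef k (fun n => if n = k then (1:ℝ) else 0) := by
  refine ⟨fun n => by by_cases h : n = k <;> simp [h], fun n hn => if_neg (by omega), ?_⟩
  exact hasSum_ite_eq k 1

lemma abs_tsum_le' {f : ℕ → ℝ} (h : Summable fun n => |f n|) : |∑' n, f n| ≤ ∑' n, |f n| := by
  have := norm_tsum_le_tsum_norm (f := f) (by simpa [Real.norm_eq_abs] using h)
  simpa [Real.norm_eq_abs] using this

section bounds

variable {S : Set (Set Γ)} {y : ℕ → Γ →₀ ℝ} {M : ℝ}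

lemma wfun_summable (hbd : ∀ n, ∀ ω ∈ dualBall S, |dPair ω (y n)| ≤ M)
    {k : ℕ} {c : ℕ → ℝ} (hc : IsCoef k c) {ω : Γ → ℝ} (hω : ω ∈ dualBall S) :
    Summable fun n => c n * dPair ω (y n) := by
  refine Summable.of_abs ?_
  refine Summable.of_nonneg_of_le (fun n => abs_nonneg _) (fun n => ?_)
    (hc.2.2.summable.mul_right M)
  rw [abs_mul, abs_of_nonneg (hc.1 n)]
  exact mul_le_mul_of_nonneg_left (hbd n ω hω) (hc.1 n)

lemma abs_wfun_le (hbd : ∀ n, ∀ ω ∈ dualBall S, |dPair ω (y n)| ≤ M)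
    {k : ℕ} {c : ℕ → ℝ} (hc : IsCoef k c) {ω : Γ → ℝ} (hω : ω ∈ dualBall S) :
    |wfun y c ω| ≤ M := by
  have h1 : Summable fun n => |c n * dPair ω (y n)| := by
    refine Summable.of_nonneg_of_le (fun n => abs_nonneg _) (fun n => ?_)
      (hc.2.2.summable.mul_right M)
    rw [abs_mul, abs_of_nonneg (hc.1 n)]
    exact mul_le_mul_of_nonneg_left (hbd n ω hω) (hc.1 n)
  calc |wfun y c ω| ≤ ∑' n, |c n * dPair ω (y n)| := abs_tsum_le' h1
  _ ≤ ∑' n, c n * M := by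
      refine Summable.tsum_le_tsum (fun n => ?_) h1 (hc.2.2.summable.mul_right M)
      rw [abs_mul, abs_of_nonneg (hc.1 n)]
      exact mul_le_mul_of_nonneg_left (hbd n ω hω) (hc.1 n)
  _ = M := by rw [tsum_mul_right, hc.2.2.tsum_eq, one_mul]

lemma wfun_le (hbd : ∀ n, ∀ ω ∈ dualBall S, |dPair ω (y n)| ≤ M)
    {k : ℕ} {c : ℕ → ℝ} (hc : IsCoef k c) {ω : Γ → ℝ} (hω : ω ∈ dualBall S)
    {t : ℝ} (h : ∀ n, k ≤ n → dPair ω (y n) ≤ t) : wfun y c ω ≤ t := by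
  calc wfun y c ω ≤ ∑' n, c n * t := by
        refine Summable.tsum_le_tsum (fun n => ?_) (wfun_summable hbd hc hω)
          (hc.2.2.summable.mul_right t)
        by_cases hn : k ≤ n
        · exact mul_le_mul_of_nonneg_left (h n hn) (hc.1 n)
        · rw [hc.2.1 n (by omega)]; simp
  _ = t := by rw [tsum_mul_right, hc.2.2.tsum_eq, one_mul]

lemma le_wfun (hbd : ∀ n, ∀ ω ∈ dualBall S, |dPair ω (y n)| ≤ M)
    {k : ℕ} {c : ℕ → ℝ} (hc : IsCoef k c) {ω : Γ → ℝ} (hω : ω ∈ dualBall S)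
    {t : ℝ} (ht : 0 ≤ t) (h : ∀ n, t ≤ dPair ω (y n)) : t ≤ wfun y c ω := by
  calc t = ∑' n, c n * t := by rw [tsum_mul_right, hc.2.2.tsum_eq, one_mul]
  _ ≤ wfun y c ω := by
      refine Summable.tsum_le_tsum (fun n => ?_) (hc.2.2.summable.mul_right t)
        (wfun_summable hbd hc hω)
      exact mul_le_mul_of_nonneg_left (h n) (hc.1 n)

lemma le_Msup {F : (Γ → ℝ) → ℝ} {B : ℝ} (hF : ∀ ω ∈ dualBall S, |F ω| ≤ B)
    {ω : Γ → ℝ} (hω : ω ∈ dualBall S) : F ω ≤ Msup S F := by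
  refine le_csSup ⟨B, ?_⟩ (Set.mem_image_of_mem F hω)
  rintro r ⟨ω', hω', rfl⟩
  exact le_trans (le_abs_self _) (hF ω' hω')

lemma Msup_le {F : (Γ → ℝ) → ℝ} {t : ℝ} (h : ∀ ω ∈ dualBall S, F ω ≤ t) :
    Msup S F ≤ t := by
  refine csSup_le ⟨F (fun _ => 0), Set.mem_image_of_mem F zero_mem_dualBall⟩ ?_
  rintro r ⟨ω', hω', rfl⟩
  exact h ω' hω'

lemma Msup_congr {F G : (Γ → ℝ) → ℝ} (h : ∀ ω ∈ dualBall S, F ω = G ω) :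
    Msup S F = Msup S G := by
  unfold Msup
  congr 1
  exact Set.image_congr h

/-- every `wfun` attains its sup over the dual ball on the closure of `Dset`. -/
lemma wfun_attain (hbd : ∀ n, ∀ ω ∈ dualBall S, |dPair ω (y n)| ≤ M)
    {k : ℕ} {c : ℕ → ℝ} (hc : IsCoef k c) :
    ∃ b ∈ closure (Dset S), ∀ ω ∈ dualBall S, wfun y c ω ≤ wfun y c b := by
  classical
  set A := closure (Dset S) with hA
  have hAcpt : IsCompact A := isCompact_closure_Dset
  have hAne : A.Nonempty := closure_Dset_nonempty
  have hAsub : A ⊆ dualBall S := closure_Dset_subset_dualBall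
  set FN : ℕ → (Γ → ℝ) → ℝ := fun N ω => ∑ n ∈ Finset.range N, c n * dPair ω (y n) with hFN
  have hFNcont : ∀ N, Continuous (FN N) := fun N =>
    continuous_finset_sum _ fun n _ => continuous_const.mul (continuous_dPair (y n))
  set τ : ℕ → ℝ := fun N => M * (1 - ∑ n ∈ Finset.range N, c n) with hτdef
  have hM0 : 0 ≤ M := le_trans (abs_nonneg _) (hbd 0 _ zero_mem_dualBall)
  have htail : ∀ (N : ℕ) (ω : Γ → ℝ), ω ∈ dualBall S → |wfun y c ω - FN N ω| ≤ τ N := by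
    intro N ω hω
    have hsum := wfun_summable hbd hc hω
    have hsplit := Summable.sum_add_tsum_nat_add N hsum
    have htsc := Summable.sum_add_tsum_nat_add N hc.2.2.summable
    have h1 : wfun y c ω - FN N ω = ∑' n, c (n+N) * dPair ω (y (n+N)) := by
      have h2 : FN N ω = ∑ n ∈ Finset.range N, c n * dPair ω (y n) := by rw [hFN]
      have h3 : wfun y c ω = ∑' n, c n * dPair ω (y n) := rfl
      rw [h2, h3, ← hsplit]
      ring
    rw [h1]
    have hsum2 : Summable fun n => c (n+N) * dPair ω (y (n+N)) :=
      (summable_nat_add_iff N).2 hsum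
    have hsumc2 : Summable fun n => c (n+N) := (summable_nat_add_iff N).2 hc.2.2.summable
    have habs2 : Summable fun n => |c (n+N) * dPair ω (y (n+N))| := by
      refine Summable.of_nonneg_of_le (fun n => abs_nonneg _) (fun n => ?_)
        (hsumc2.mul_right M)
      rw [abs_mul, abs_of_nonneg (hc.1 _)]
      exact mul_le_mul_of_nonneg_left (hbd _ ω hω) (hc.1 _)
    calc |∑' n, c (n+N) * dPair ω (y (n+N))| ≤ ∑' n, |c (n+N) * dPair ω (y (n+N))| :=
          abs_tsum_le' habs2
    _ ≤ ∑' n, c (n+N) * M := by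
        refine Summable.tsum_le_tsum (fun n => ?_) habs2 (hsumc2.mul_right M)
        rw [abs_mul, abs_of_nonneg (hc.1 _)]
        exact mul_le_mul_of_nonneg_left (hbd _ ω hω) (hc.1 _)
    _ = τ N := by
        rw [tsum_mul_right, hτdef]
        have : ∑' n, c (n+N) = 1 - ∑ n ∈ Finset.range N, c n := by
          rw [← hc.2.2.tsum_eq]
          linarith [htsc]
        rw [this]
        ring
  have hτ0 : Tendsto τ atTop (𝓝 0) := by
    have h1 : Tendsto (fun N => ∑ n ∈ Finset.range N, c n) atTop (𝓝 1) :=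
      hc.2.2.tendsto_sum_nat
    have h2 : Tendsto (fun N => 1 - ∑ n ∈ Finset.range N, c n) atTop (𝓝 0) := by
      have := tendsto_const_nhds (x := (1:ℝ)) (f := atTop (α := ℕ)) |>.sub h1
      simpa using this
    have := h2.const_mul M
    simpa using this
  have hunif : TendstoUniformlyOn FN (wfun y c) atTop A := by
    rw [Metric.tendstoUniformlyOn_iff]
    intro δ hδ
    filter_upwards [hτ0.eventually (gt_mem_nhds hδ)] with N hN ω hω
    rw [Real.dist_eq]
    calc |wfun y c ω - FN N ω| ≤ τ N := htail N ω (hAsub hω)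
    _ < δ := hN
  have hcont : ContinuousOn (wfun y c) A :=
    hunif.continuousOn (Filter.Eventually.of_forall fun N => (hFNcont N).continuousOn).frequently
  obtain ⟨b, hbA, hbmax⟩ := hAcpt.exists_isMaxOn hAne hcont
  refine ⟨b, hbA, fun ω hω => ?_⟩
  refine le_of_forall_pos_le_add fun δ hδ => ?_
  obtain ⟨N, hN⟩ := (hτ0.eventually (gt_mem_nhds (show (0:ℝ) < δ/4 by linarith))).exists
  set z : Γ →₀ ℝ := ∑ n ∈ Finset.range N, c n • y n with hz
  have hzpair : ∀ ω' : Γ → ℝ, dPair ω' z = FN N ω' := by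
    intro ω'
    rw [hz, dPair_finsum]
  obtain ⟨d, hdD, hdnear⟩ := exists_Dset_near (S := S) z (show (0:ℝ) < δ/4 by linarith)
  have hd1 := htail N ω hω
  have hd2 := htail N d (Dset_subset_dualBall hdD)
  rw [abs_le] at hd1 hd2
  have step1 : wfun y c ω ≤ FN N ω + τ N := by linarith [hd1.2]
  have step2 : FN N ω ≤ jamesNorm S z := by
    rw [← hzpair ω]
    exact le_trans (le_abs_self _) (hω z)
  have step3 : jamesNorm S z ≤ dPair d z + δ/4 := by linarith [hdnear]
  have step4 : dPair d z = FN N d := hzpair d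
  have step5 : FN N d ≤ wfun y c d + τ N := by linarith [hd2.1]
  have step6 : wfun y c d ≤ wfun y c b := hbmax (subset_closure hdD)
  linarith

end bounds

section mix

lemma cc_summable : Summable (fun j : ℕ => ((1:ℝ)/2)^(j+1)) := by
  have h := summable_geometric_of_lt_one (r := (1:ℝ)/2) (by norm_num) (by norm_num)
  exact (h.mul_right (1/2)).congr fun j => by rw [pow_succ]

lemma cc_tsum : ∑' j : ℕ, ((1:ℝ)/2)^(j+1) = 1 := by
  have h1 : ∀ j : ℕ, ((1:ℝ)/2)^(j+1) = ((1:ℝ)/2)^j * (1/2) := fun j => pow_succ _ _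
  rw [tsum_congr h1, tsum_mul_right, tsum_geometric_of_lt_one (by norm_num) (by norm_num)]
  norm_num

lemma cc_nonneg (j : ℕ) : (0:ℝ) ≤ ((1:ℝ)/2)^(j+1) := by positivity

lemma cc_hasSum : HasSum (fun j : ℕ => ((1:ℝ)/2)^(j+1)) 1 :=
  cc_summable.hasSum_iff.2 cc_tsum

/-- Fubini core for mixing countably many coefficient families. -/
lemma mix_core (k : ℕ) (vv : ℕ → ℕ → ℝ) (hvv : ∀ j, IsCoef (j + k) (vv j))
    (q : ℕ → ℝ) (M' : ℝ) (hM' : 0 ≤ M') (hq : ∀ n, |q n| ≤ M') :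
    (Summable fun n => (∑' j, ((1:ℝ)/2)^(j+1) * vv j n) * q n) ∧
      ∑' n, (∑' j, ((1:ℝ)/2)^(j+1) * vv j n) * q n
        = ∑' j, ((1:ℝ)/2)^(j+1) * ∑' n, vv j n * q n := by
  classical
  set cc : ℕ → ℝ := fun j => ((1:ℝ)/2)^(j+1) with hcc
  have hcc0 : ∀ j, 0 ≤ cc j := cc_nonneg
  -- inner summabilities
  have hSj : ∀ j, Summable fun n => vv j n * q n := by
    intro j
    refine Summable.of_abs (Summable.of_nonneg_of_le (fun n => abs_nonneg _) (fun n => ?_)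
      ((hvv j).2.2.summable.mul_right M'))
    rw [abs_mul, abs_of_nonneg ((hvv j).1 n)]
    exact mul_le_mul_of_nonneg_left (hq n) ((hvv j).1 n)
  -- summability of the nonnegative product family
  have hGb : Summable (fun p : ℕ × ℕ => cc p.1 * vv p.1 p.2) := by
    rw [summable_prod_of_nonneg (fun p => mul_nonneg (hcc0 p.1) ((hvv p.1).1 p.2))]
    constructor
    · intro j
      exact ((hvv j).2.2.summable.mul_left (cc j))
    · refine cc_summable.congr fun j => ?_
      show cc j = ∑' n, cc j * vv j n
      rw [tsum_mul_left, (hvv j).2.2.tsum_eq, mul_one]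
  -- summability of the signed family
  have hGabs : Summable (fun p : ℕ × ℕ => |cc p.1 * vv p.1 p.2 * q p.2|) := by
    refine Summable.of_nonneg_of_le (fun p => abs_nonneg _) (fun p => ?_) (hGb.mul_right M')
    rw [abs_mul, abs_mul, abs_of_nonneg (hcc0 p.1), abs_of_nonneg ((hvv p.1).1 p.2)]
    exact mul_le_mul_of_nonneg_left (hq p.2) (mul_nonneg (hcc0 p.1) ((hvv p.1).1 p.2))
  have hG : Summable (fun p : ℕ × ℕ => cc p.1 * vv p.1 p.2 * q p.2) :=
    Summable.of_abs hGabs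
  -- rows and columns
  have hrow : ∀ j, Summable fun n => cc j * vv j n * q n := by
    intro j
    exact ((hSj j).mul_left (cc j)).congr fun n => by ring
  have hcolabs : ∀ n, Summable fun j => |cc j * vv j n * q n| := by
    intro n
    refine Summable.of_nonneg_of_le (fun j => abs_nonneg _) (fun j => ?_)
      (cc_summable.mul_right M')
    rw [abs_mul, abs_mul, abs_of_nonneg (hcc0 j), abs_of_nonneg ((hvv j).1 n)]
    calc cc j * vv j n * |q n| ≤ cc j * 1 * M' := by
          refine mul_le_mul (mul_le_mul le_rfl ((hvv j).coef_le_one n) ((hvv j).1 n) (hcc0 j))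
            (hq n) (abs_nonneg _) (by positivity)
    _ = cc j * M' := by ring
  have hcol : ∀ n, Summable fun j => cc j * vv j n * q n :=
    fun n => Summable.of_abs (hcolabs n)
  -- Fubini
  have hcomm : ∑' n, ∑' j, cc j * vv j n * q n = ∑' j, ∑' n, cc j * vv j n * q n := by
    refine Summable.tsum_comm' hG hrow hcol
  -- pointwise identification of the inner sums
  have hpt : ∀ n, (∑' j, cc j * vv j n) * q n = ∑' j, cc j * vv j n * q n := by
    intro n
    exact (tsum_mul_right (f := fun j => cc j * vv j n) (a := q n)).symm
  have hptj : ∀ j, cc j * ∑' n, vv j n * q n = ∑' n, cc j * vv j n * q n := by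
    intro j
    rw [← tsum_mul_left]
    exact tsum_congr fun n => by ring
  constructor
  · -- summability of the outer series
    have hdom : Summable fun n => ∑' j, |cc j * vv j n * q n| := by
      have hswap : Summable (fun p : ℕ × ℕ => |cc p.2 * vv p.2 p.1 * q p.1|) := by
        have := hGabs.prod_symm
        exact this.congr fun p => rfl
      rw [summable_prod_of_nonneg (fun p => abs_nonneg _)] at hswap
      exact hswap.2
    refine Summable.of_abs (Summable.of_nonneg_of_le (fun n => abs_nonneg _)
      (fun n => ?_) hdom)
    rw [hpt n]
    exact abs_tsum_le' (hcolabs n)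
  · rw [tsum_congr hpt, hcomm, tsum_congr fun j => (hptj j).symm]

lemma mix_isCoef (k : ℕ) (vv : ℕ → ℕ → ℝ) (hvv : ∀ j, IsCoef (j + k) (vv j)) :
    IsCoef k (fun n => ∑' j, ((1:ℝ)/2)^(j+1) * vv j n) := by
  obtain ⟨hsum, heq⟩ := mix_core k vv hvv (fun _ => 1) 1 zero_le_one (fun n => by norm_num)
  refine ⟨fun n => tsum_nonneg fun j => mul_nonneg (cc_nonneg j) ((hvv j).1 n), ?_, ?_⟩
  · intro n hn
    have h0 : ∀ j, ((1:ℝ)/2)^(j+1) * vv j n = 0 := fun j => by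
      rw [(hvv j).2.1 n (by omega), mul_zero]
    show (∑' j, ((1:ℝ)/2)^(j+1) * vv j n) = 0
    rw [tsum_congr h0, tsum_zero]
  · have hs : Summable (fun n => (∑' j, ((1:ℝ)/2)^(j+1) * vv j n)) :=
      hsum.congr fun n => mul_one _
    refine hs.hasSum_iff.2 ?_
    have h2 : ∑' n, (∑' j, ((1:ℝ)/2)^(j+1) * vv j n)
        = ∑' n, (∑' j, ((1:ℝ)/2)^(j+1) * vv j n) * 1 := tsum_congr fun n => (mul_one _).symm
    rw [h2, heq]
    have h3 : ∀ j, ((1:ℝ)/2)^(j+1) * ∑' n, vv j n * 1 = ((1:ℝ)/2)^(j+1) := by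
      intro j
      have h4 : (fun n => vv j n * 1) = vv j := funext fun n => mul_one _
      rw [h4, (hvv j).2.2.tsum_eq, mul_one]
    rw [tsum_congr h3, cc_tsum]

lemma mix_wfun {S : Set (Set Γ)} {y : ℕ → Γ →₀ ℝ} {M : ℝ}
    (hbd : ∀ n, ∀ ω ∈ dualBall S, |dPair ω (y n)| ≤ M)
    (k : ℕ) (vv : ℕ → ℕ → ℝ) (hvv : ∀ j, IsCoef (j + k) (vv j)) :
    ∀ ω ∈ dualBall S,
      wfun y (fun n => ∑' j, ((1:ℝ)/2)^(j+1) * vv j n) ω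
        = ∑' j, ((1:ℝ)/2)^(j+1) * wfun y (vv j) ω := by
  intro ω hω
  have hM0 : 0 ≤ M := le_trans (abs_nonneg _) (hbd 0 _ zero_mem_dualBall)
  exact (mix_core k vv hvv (fun n => dPair ω (y n)) M hM0 (fun n => hbd n ω hω)).2

end mix

/-- **Simons' inequality, contradiction form**: a bounded sequence that tends to 0
against every element of the closure of `Dset S` cannot stay `≥ 2ε` against a member
of the dual ball. -/
lemma simons_contra {S : Set (Set Γ)} (y : ℕ → Γ →₀ ℝ) (M : ℝ)
    (hbd : ∀ n, ∀ ω ∈ dualBall S, |dPair ω (y n)| ≤ M)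
    (hA : ∀ e ∈ closure (Dset S), Tendsto (fun n => dPair e (y n)) atTop (𝓝 0))
    (ω₀ : Γ → ℝ) (hω₀ : ω₀ ∈ dualBall S) (ε : ℝ) (hε : 0 < ε)
    (hlow : ∀ n, 2*ε ≤ dPair ω₀ (y n)) : False := by
  classical
  have hM0 : 0 ≤ M := le_trans (abs_nonneg _) (hbd 0 _ zero_mem_dualBall)
  set Inv : ℕ → ((Γ → ℝ) → ℝ) → Prop :=
    fun k h => ∀ ω ∈ dualBall S, |h ω| ≤ M * (1 - ((1:ℝ)/2)^k) with hInvDef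
  have hFbd : ∀ (k : ℕ) (h : (Γ → ℝ) → ℝ), Inv k h → ∀ (c : ℕ → ℝ), IsCoef k c →
      ∀ ω ∈ dualBall S, |h ω + ((1:ℝ)/2)^k * wfun y c ω| ≤ 2*M := by
    intro k h hInv c hcI ω hω
    have h1 := hInv ω hω
    have h2 := abs_wfun_le hbd hcI hω
    have h3 : (0:ℝ) ≤ ((1:ℝ)/2)^k := by positivity
    have h4 : ((1:ℝ)/2)^k ≤ 1 := pow_le_one₀ (by norm_num) (by norm_num)
    calc |h ω + ((1:ℝ)/2)^k * wfun y c ω| ≤ |h ω| + |((1:ℝ)/2)^k * wfun y c ω| := abs_add_le _ _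
    _ ≤ M * (1 - ((1:ℝ)/2)^k) + ((1:ℝ)/2)^k * M := by
        rw [abs_mul, abs_of_nonneg h3]
        have h5 := mul_le_mul_of_nonneg_left h2 h3
        linarith
    _ ≤ 2*M := by nlinarith
  set mset : ℕ → ((Γ → ℝ) → ℝ) → Set ℝ := fun k h =>
    {r | ∃ c, IsCoef k c ∧ r = Msup S (fun ω => h ω + ((1:ℝ)/2)^k * wfun y c ω)} with hmsetDef
  have hmne : ∀ (k : ℕ) (h : (Γ → ℝ) → ℝ), (mset k h).Nonempty := fun k h =>
    ⟨_, (fun n => if n = k then (1:ℝ) else 0), IsCoef.pure k, rfl⟩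
  have hstep : ∀ (k : ℕ) (h : (Γ → ℝ) → ℝ), Inv k h → ∃ c, IsCoef k c ∧
      Msup S (fun ω => h ω + ((1:ℝ)/2)^k * wfun y c ω)
        < sInf (mset k h) + ε * ((1:ℝ)/2)^(2*k+2) := by
    intro k h _
    obtain ⟨r, hrm, hr⟩ := Real.lt_sInf_add_pos (hmne k h)
      (show (0:ℝ) < ε * ((1:ℝ)/2)^(2*k+2) by positivity)
    obtain ⟨c, hcI, rfl⟩ := hrm
    exact ⟨c, hcI, hr⟩
  choose step hstep1 hstep2 using hstep
  have hnext : ∀ (k : ℕ) (h : (Γ → ℝ) → ℝ) (hh : Inv k h),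
      Inv (k+1) (fun ω => h ω + ((1:ℝ)/2)^(k+1) * wfun y (step k h hh) ω) := by
    intro k h hh ω hω
    have h1 := hh ω hω
    have h2 := abs_wfun_le hbd (hstep1 k h hh) hω
    have h3 : (0:ℝ) ≤ ((1:ℝ)/2)^(k+1) := by positivity
    have hps : ((1:ℝ)/2)^(k+1) = ((1:ℝ)/2)^k * (1/2) := pow_succ _ _
    calc |h ω + ((1:ℝ)/2)^(k+1) * wfun y (step k h hh) ω|
        ≤ |h ω| + |((1:ℝ)/2)^(k+1) * wfun y (step k h hh) ω| := abs_add_le _ _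
    _ ≤ M * (1 - ((1:ℝ)/2)^k) + ((1:ℝ)/2)^(k+1) * M := by
        rw [abs_mul, abs_of_nonneg h3]
        have h5 := mul_le_mul_of_nonneg_left h2 h3
        linarith
    _ ≤ M * (1 - ((1:ℝ)/2)^(k+1)) := by rw [hps]; nlinarith
  let T : (k : ℕ) → {h : (Γ → ℝ) → ℝ // Inv k h} := fun k =>
    Nat.rec ⟨fun _ => 0, by intro ω _; simp [hInvDef]⟩
      (fun k ih => ⟨fun ω => ih.1 ω + ((1:ℝ)/2)^(k+1) * wfun y (step k ih.1 ih.2) ω,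
        hnext k ih.1 ih.2⟩) k
  set hfun : ℕ → (Γ → ℝ) → ℝ := fun k => (T k).1 with hfunDef
  set v : ℕ → ℕ → ℝ := fun k => step k (T k).1 (T k).2 with hvDef
  have hfun0 : hfun 0 = fun _ => 0 := rfl
  have hfunS : ∀ k, hfun (k+1) = fun ω => hfun k ω + ((1:ℝ)/2)^(k+1) * wfun y (v k) ω :=
    fun _ => rfl
  have hvI : ∀ k, IsCoef k (v k) := fun k => hstep1 k (T k).1 (T k).2
  have hvspec : ∀ k, Msup S (fun ω => hfun k ω + ((1:ℝ)/2)^k * wfun y (v k) ω)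
      < sInf (mset k (hfun k)) + ε * ((1:ℝ)/2)^(2*k+2) := fun k => hstep2 k (T k).1 (T k).2
  have hInvk : ∀ k, Inv k (hfun k) := fun k => (T k).2
  have hfun_eq : ∀ k (ω : Γ → ℝ),
      hfun k ω = ∑ j ∈ Finset.range k, ((1:ℝ)/2)^(j+1) * wfun y (v j) ω := by
    intro k
    induction k with
    | zero => intro ω; rw [hfun0]; simp
    | succ k ih =>
        intro ω
        rw [hfunS k]
        simp only []
        rw [ih, Finset.sum_range_succ]
  have hshift : ∀ k j, IsCoef (j + k) (v (j + k)) := fun k j => hvI (j + k)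
  set wc : ℕ → ℕ → ℝ := fun k n => ∑' j, ((1:ℝ)/2)^(j+1) * v (j + k) n with hwcDef
  have hwcI : ∀ k, IsCoef k (wc k) := fun k => mix_isCoef k _ (hshift k)
  have hwcEq : ∀ k, ∀ ω ∈ dualBall S,
      wfun y (wc k) ω = ∑' j, ((1:ℝ)/2)^(j+1) * wfun y (v (j + k)) ω :=
    fun k => mix_wfun hbd k _ (hshift k)
  have hseries : ∀ (ω : Γ → ℝ), ω ∈ dualBall S →
      Summable fun j => ((1:ℝ)/2)^(j+1) * wfun y (v j) ω := by
    intro ω hω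
    refine Summable.of_abs (Summable.of_nonneg_of_le (fun j => abs_nonneg _) (fun j => ?_)
      (cc_summable.mul_right M))
    rw [abs_mul, abs_of_nonneg (cc_nonneg j)]
    exact mul_le_mul_of_nonneg_left (abs_wfun_le hbd (hvI j) hω) (cc_nonneg j)
  have hIk : ∀ k, ∀ ω ∈ dualBall S,
      hfun k ω + ((1:ℝ)/2)^k * wfun y (wc k) ω = wfun y (wc 0) ω := by
    intro k ω hω
    have hwc0 : wfun y (wc 0) ω = ∑' j, ((1:ℝ)/2)^(j+1) * wfun y (v j) ω :=
      (hwcEq 0 ω hω).trans (tsum_congr fun j => by norm_num)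
    have hsplit := Summable.sum_add_tsum_nat_add
      (f := fun j => ((1:ℝ)/2)^(j+1) * wfun y (v j) ω) k (hseries ω hω)
    have h5 : ∀ j : ℕ, ((1:ℝ)/2)^(j+k+1) * wfun y (v (j+k)) ω
        = ((1:ℝ)/2)^k * (((1:ℝ)/2)^(j+1) * wfun y (v (j+k)) ω) := by
      intro j
      rw [show j + k + 1 = (j+1) + k by ring, pow_add]
      ring
    have h6 : ∑' j : ℕ, ((1:ℝ)/2)^(j+k+1) * wfun y (v (j+k)) ω
        = ((1:ℝ)/2)^k * ∑' j, ((1:ℝ)/2)^(j+1) * wfun y (v (j+k)) ω := by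
      rw [tsum_congr h5, tsum_mul_left]
    rw [hwc0, hwcEq k ω hω, hfun_eq k ω, ← hsplit, ← h6] <;> ring
  obtain ⟨b, hbA, hbmax⟩ := wfun_attain hbd (hwcI 0)
  have hbΩ : b ∈ dualBall S := closure_Dset_subset_dualBall hbA
  set σ : ℝ := wfun y (wc 0) b with hσdef
  have hσ2ε : 2*ε ≤ σ :=
    le_trans (le_wfun hbd (hwcI 0) hω₀ (by linarith) hlow) (hbmax ω₀ hω₀)
  have hmbdd : ∀ k, BddBelow (mset k (hfun k)) := by
    intro k
    refine ⟨-(2*M), ?_⟩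
    rintro r ⟨c, hcI, rfl⟩
    have h1 := hFbd k (hfun k) (hInvk k) c hcI
    have h2 : -(2*M) ≤ hfun k (fun _ => 0) + ((1:ℝ)/2)^k * wfun y c (fun _ => 0) := by
      have h3 := abs_le.1 (h1 _ zero_mem_dualBall)
      linarith [h3.1]
    exact le_trans h2 (le_Msup h1 zero_mem_dualBall)
  have hminf_le : ∀ k, sInf (mset k (hfun k)) ≤ σ := by
    intro k
    refine le_trans (csInf_le (hmbdd k) ⟨wc k, hwcI k, rfl⟩) ?_
    refine Msup_le fun ω hω => ?_
    rw [hIk k ω hω]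
    exact hbmax ω hω
  set W : ℕ → ℝ := fun k => wfun y (wc k) b with hWdef
  have hW0 : W 0 = σ := rfl
  have hWrec : ∀ k, W k - ε * ((1:ℝ)/2)^(k+2) ≤ W (k+1) := by
    intro k
    have e1 : hfun k b + ((1:ℝ)/2)^k * wfun y (v k) b
        ≤ Msup S (fun ω => hfun k ω + ((1:ℝ)/2)^k * wfun y (v k) ω) :=
      le_Msup (hFbd k (hfun k) (hInvk k) (v k) (hvI k)) hbΩ
    have e2 := hvspec k
    have e3 := hminf_le k
    have e4 : hfun k b + ((1:ℝ)/2)^k * W k = σ := hIk k b hbΩ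
    have e5 : hfun (k+1) b + ((1:ℝ)/2)^(k+1) * W (k+1) = σ := hIk (k+1) b hbΩ
    have e6 : hfun (k+1) b = hfun k b + ((1:ℝ)/2)^(k+1) * wfun y (v k) b := by
      rw [hfunS k]
    have hppos : (0:ℝ) < ((1:ℝ)/2)^k := by positivity
    have hp1 : ((1:ℝ)/2)^(k+1) = ((1:ℝ)/2)^k * (1/2) := pow_succ _ _
    have hp2 : ((1:ℝ)/2)^(2*k+2) = ((1:ℝ)/2)^k * ((1:ℝ)/2)^k * (1/4) := by
      rw [show 2*k+2 = k + (k + 2) by ring, pow_add,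
        show k + 2 = (k+1)+1 by ring, pow_succ, pow_succ]
      ring
    have hp3 : ((1:ℝ)/2)^(k+2) = ((1:ℝ)/2)^k * (1/4) := by
      rw [show k + 2 = (k+1)+1 by ring, pow_succ, pow_succ]
      ring
    -- from e1,e2,e3,e4 : wfun y (v k) b < W k + ε * (1/2)^(k+2)
    have e7 : ((1:ℝ)/2)^k * wfun y (v k) b
        < ((1:ℝ)/2)^k * W k + ε * ((1:ℝ)/2)^(2*k+2) := by linarith
    have e8 : wfun y (v k) b < W k + ε * ((1:ℝ)/2)^(k+2) := by
      rw [hp3]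
      rw [hp2] at e7
      nlinarith
    -- from e4,e5,e6 : W (k+1) = 2 * W k - wfun y (v k) b
    have e9 : ((1:ℝ)/2)^(k+1) * (wfun y (v k) b + W (k+1)) = ((1:ℝ)/2)^k * W k := by
      rw [hp1] at e5 e6 ⊢
      nlinarith [e4, e5, e6]
    have e10 : W (k+1) = 2 * W k - wfun y (v k) b := by
      rw [hp1] at e9
      have := e9
      field_simp at this
      nlinarith [this, hppos]
    linarith [e8, e10.ge, e10.le]
  have hWlb : ∀ k, σ - ε * (1 - ((1:ℝ)/2)^k) / 2 ≤ W k := by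
    intro k
    induction k with
    | zero => rw [hW0]; norm_num
    | succ k ih =>
        have h1 := hWrec k
        have hps : ((1:ℝ)/2)^(k+1) = ((1:ℝ)/2)^k * (1/2) := pow_succ _ _
        have hps2 : ((1:ℝ)/2)^(k+2) = ((1:ℝ)/2)^k * (1/4) := by
          rw [show k + 2 = (k+1)+1 by ring, pow_succ, pow_succ]
          ring
        rw [hps]
        rw [hps2] at h1
        nlinarith
  have hWfin : ∀ k, σ - ε/2 ≤ W k := by
    intro k
    have h1 := hWlb k
    have h2 : ((1:ℝ)/2)^k ≤ 1 := pow_le_one₀ (by norm_num) (by norm_num)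
    have h3 : (0:ℝ) ≤ ((1:ℝ)/2)^k := by positivity
    nlinarith
  have hbig : ∀ k, ∃ n, k ≤ n ∧ σ - ε < dPair b (y n) := by
    intro k
    by_contra hcon
    push_neg at hcon
    have h1 : W k ≤ σ - ε := wfun_le hbd (hwcI k) hbΩ hcon
    have h2 := hWfin k
    linarith
  have htend := hA b hbA
  have hσε : (0:ℝ) < σ - ε := by linarith
  have hev' : ∀ᶠ n in atTop, |dPair b (y n)| < σ - ε := by
    have h1 := Metric.tendsto_nhds.mp htend (σ - ε) hσε
    refine h1.mono fun n hn => ?_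
    rwa [Real.dist_eq, sub_zero] at hn
  obtain ⟨N, hN⟩ := Filter.eventually_atTop.1 hev'
  obtain ⟨n, hn1, hn2⟩ := hbig N
  have h1 := hN n hn1
  have h2 := le_abs_self (dPair b (y n))
  linarith

end JSAux


open JSAux in
/-- Let `(x_n)` be a bounded sequence in `JS` (here: of finitely supported functions, which
are dense in `JS`). If `(s*(x_n))` is Cauchy for every `s ∈ S`, then `(x_n)` is weakly
Cauchy, i.e. `(g(x_n))` is Cauchy for every bounded linear functional `g` on `JS`. -/
theorem stmt10 {Γ : Type*} (S : Set (Set Γ)) (hS : IsCI S) (x : ℕ → Γ →₀ ℝ)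
    (hb : ∃ C : ℝ, ∀ n, jamesNorm S (x n) ≤ C)
    (hc : ∀ s ∈ S, CauchySeq fun n => segSum s (x n)) :
    ∀ g : Γ → ℝ, (∃ C : ℝ, ∀ φ : Γ →₀ ℝ, |dPair g φ| ≤ C * jamesNorm S φ) →
      CauchySeq fun n => dPair g (x n) := by
  classical
  obtain ⟨Cb, hCb⟩ := hb
  intro g hg
  obtain ⟨C, hC⟩ := hg
  set C' : ℝ := max C 1 with hC'def
  have hC'pos : (0:ℝ) < C' := lt_of_lt_of_le one_pos (le_max_right _ _)
  set g' : Γ → ℝ := fun γ => g γ / C' with hg'def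
  have hgpair : ∀ φ, dPair g' φ = dPair g φ / C' := by
    intro φ
    unfold dPair
    rw [Finset.sum_div]
    refine Finset.sum_congr rfl fun a _ => ?_
    rw [hg'def]
    ring
  have hg'Ω : g' ∈ dualBall S := by
    intro φ
    rw [hgpair, abs_div, abs_of_pos hC'pos, div_le_iff₀ hC'pos]
    calc |dPair g φ| ≤ C * jamesNorm S φ := hC φ
    _ ≤ jamesNorm S φ * C' := by
        have h9 := jamesNorm_nonneg (S := S) φ
        have h8 : C ≤ C' := le_max_left _ _
        nlinarith
  have hLB := JSAux.cauchy_on_closure hS.closed x Cb hCb hc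
  by_contra hnc
  rw [Metric.cauchySeq_iff] at hnc
  push_neg at hnc
  obtain ⟨ε₀, hε₀, hbad⟩ := hnc
  have hpairs : ∀ N, ∃ q : ℕ × ℕ, N ≤ q.1 ∧ N ≤ q.2 ∧
      ε₀ ≤ dPair g (x q.1) - dPair g (x q.2) := by
    intro N
    obtain ⟨m, hm, n, hn, hd⟩ := hbad N
    rw [Real.dist_eq] at hd
    rcases le_or_gt (dPair g (x n)) (dPair g (x m)) with h | h
    · refine ⟨(m, n), hm, hn, ?_⟩
      rw [abs_of_nonneg (by linarith)] at hd
      linarith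
    · refine ⟨(n, m), hn, hm, ?_⟩
      rw [abs_of_neg (by linarith)] at hd
      linarith
  choose q hq1 hq2 hq3 using hpairs
  set y : ℕ → Γ →₀ ℝ := fun N => x (q N).1 - x (q N).2 with hydef
  have hypair : ∀ (ω : Γ → ℝ) (N : ℕ),
      dPair ω (y N) = dPair ω (x (q N).1) - dPair ω (x (q N).2) := by
    intro ω N
    rw [hydef]
    exact dPair_sub ω _ _
  have hM : ∀ n, ∀ ω ∈ dualBall S, |dPair ω (y n)| ≤ 2 * Cb := by
    intro n ω hω
    rw [hypair]
    have h1 := le_trans (hω (x (q n).1)) (hCb _)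
    have h2 := le_trans (hω (x (q n).2)) (hCb _)
    calc |dPair ω (x (q n).1) - dPair ω (x (q n).2)|
        ≤ |dPair ω (x (q n).1)| + |dPair ω (x (q n).2)| := abs_sub _ _
    _ ≤ 2 * Cb := by linarith
  have hA0 : ∀ e ∈ closure (Dset S), Tendsto (fun n => dPair e (y n)) atTop (𝓝 0) := by
    intro e he
    obtain ⟨L, hL⟩ := cauchySeq_tendsto_of_complete (hLB e he)
    have h1 : Tendsto (fun N => (q N).1) atTop atTop :=
      tendsto_atTop_mono (fun N => hq1 N) tendsto_id
    have h2 : Tendsto (fun N => (q N).2) atTop atTop :=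
      tendsto_atTop_mono (fun N => hq2 N) tendsto_id
    have h3 : Tendsto (fun N => dPair e (x (q N).1)) atTop (𝓝 L) := hL.comp h1
    have h4 : Tendsto (fun N => dPair e (x (q N).2)) atTop (𝓝 L) := hL.comp h2
    have h5 := h3.sub h4
    rw [sub_self] at h5
    exact h5.congr fun N => (hypair e N).symm
  have hlow : ∀ n, 2 * (ε₀ / (2 * C')) ≤ dPair g' (y n) := by
    intro n
    have h1 : dPair g' (y n) = dPair g (y n) / C' := hgpair (y n)
    have h2 : ε₀ ≤ dPair g (y n) := by
      rw [hypair g n]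
      exact hq3 n
    rw [h1, show 2 * (ε₀ / (2 * C')) = ε₀ / C' by field_simp]
    gcongr
  exact JSAux.simons_contra y (2*Cb) hM hA0 g' hg'Ω (ε₀ / (2 * C'))
    (by positivity) hlow
end

section
/- In Talagrand's space, for every partition (Γ_n)_{n∈ℕ} of Γ = ℕ^ℕ into countably many sets, there exists an infinite admissible set s contained in some Γ_n. -/
/-!
For a set `A ⊆ ℕ^ℕ`, a coordinate `n` and a point `σ`, look at the values at coordinate `n` of the
points of `A` that agree with `σ` below `n`. If for some `n` this set is infinite for `A = Γ_n`,
then one point per value is an infinite admissible subset of `Γ_n`. Otherwise a diagonal point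
`γ`, whose `n`-th coordinate avoids the finite set attached to `Γ_n` and to `γ` itself, lies in
no `Γ_n`, contradicting that the `Γ_n` cover `ℕ^ℕ`; this replaces the Baire category argument.
-/

/-- A subset `s` of `ℕ^ℕ` is admissible if there is `n` such that any two distinct elements
of `s` agree on the coordinates before `n` and differ at coordinate `n` (sets with at most
one element are admissible). -/
def TalAdmissible (s : Set (ℕ → ℕ)) : Prop :=
  ∃ n : ℕ, ∀ γ₁ ∈ s, ∀ γ₂ ∈ s, γ₁ ≠ γ₂ → (∀ k < n, γ₁ k = γ₂ k) ∧ γ₁ n ≠ γ₂ n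

namespace Talagrand

def extensionValues (A : Set (ℕ → ℕ)) (σ : ℕ → ℕ) (n : ℕ) : Set ℕ :=
  {v | ∃ γ ∈ A, (∀ k < n, γ k = σ k) ∧ γ n = v}

variable {A : Set (ℕ → ℕ)}

theorem apply_mem_extensionValues {γ : ℕ → ℕ} (hγ : γ ∈ A) (n : ℕ) :
    γ n ∈ extensionValues A γ n :=
  ⟨γ, hγ, fun _ _ => rfl, rfl⟩

theorem extensionValues_congr {σ τ : ℕ → ℕ} {n : ℕ} (h : ∀ k < n, σ k = τ k) :
    extensionValues A σ n = extensionValues A τ n := by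
  ext v
  constructor <;> rintro ⟨γ, hγ, hpre, rfl⟩
  · exact ⟨γ, hγ, fun k hk => (hpre k hk).trans (h k hk), rfl⟩
  · exact ⟨γ, hγ, fun k hk => (hpre k hk).trans (h k hk).symm, rfl⟩

theorem exists_admissible_infinite_subset_of_infinite_extensionValues {σ : ℕ → ℕ} {n : ℕ}
    (h : (extensionValues A σ n).Infinite) : ∃ s ⊆ A, TalAdmissible s ∧ s.Infinite := by
  choose! f hfA hfσ hfn using fun v (hv : v ∈ extensionValues A σ n) => hv
  have hinj : Set.InjOn f (extensionValues A σ n) := fun v hv w hw hvw => by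
    rw [← hfn v hv, ← hfn w hw, hvw]
  refine ⟨f '' extensionValues A σ n, Set.image_subset_iff.2 hfA, ⟨n, ?_⟩, h.image hinj⟩
  rintro _ ⟨v, hv, rfl⟩ _ ⟨w, hw, rfl⟩ hne
  refine ⟨fun k hk => (hfσ v hv k hk).trans (hfσ w hw k hk).symm, ?_⟩
  rw [hfn v hv, hfn w hw]
  exact fun hvw => hne (congrArg f hvw)

noncomputable def recOnPrefix (F : ℕ → (ℕ → ℕ) → ℕ) : ℕ → ℕ
  | n => F n (fun k => if k < n then recOnPrefix F k else 0)

theorem recOnPrefix_apply (F : ℕ → (ℕ → ℕ) → ℕ) (n : ℕ) :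
    recOnPrefix F n = F n (fun k => if k < n then recOnPrefix F k else 0) := by
  rw [recOnPrefix]

theorem exists_not_mem_iUnion_of_finite_extensionValues (A : ℕ → Set (ℕ → ℕ))
    (h : ∀ n σ, (extensionValues (A n) σ n).Finite) : ∃ γ, γ ∉ ⋃ n, A n := by
  choose pick hpick using fun n σ => (h n σ).infinite_compl.nonempty
  refine ⟨recOnPrefix pick, fun hmem => ?_⟩
  obtain ⟨n, hn⟩ := Set.mem_iUnion.1 hmem
  have hprefix : ∀ k < n, (if k < n then recOnPrefix pick k else 0) = recOnPrefix pick k :=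
    fun k hk => if_pos hk
  apply hpick n (fun k => if k < n then recOnPrefix pick k else 0)
  rw [extensionValues_congr hprefix, ← recOnPrefix_apply pick n]
  exact apply_mem_extensionValues hn n

end Talagrand

open Talagrand in
theorem stmt14_general (G : ℕ → Set (ℕ → ℕ)) (hcov : (⋃ n, G n) = Set.univ) :
    ∃ (n : ℕ) (s : Set (ℕ → ℕ)), s ⊆ G n ∧ TalAdmissible s ∧ s.Infinite := by
  by_cases hfin : ∀ n σ, (extensionValues (G n) σ n).Finite
  · obtain ⟨γ, hγ⟩ := exists_not_mem_iUnion_of_finite_extensionValues G hfin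
    exact absurd (hcov ▸ Set.mem_univ γ) hγ
  · push Not at hfin
    obtain ⟨n, σ, hinf⟩ := hfin
    exact ⟨n, exists_admissible_infinite_subset_of_infinite_extensionValues hinf⟩

/-- In Talagrand's space: for every partition of `Γ = ℕ^ℕ` into countably many sets there is
an infinite admissible set contained in one piece. -/
theorem stmt14 (G : ℕ → Set (ℕ → ℕ)) (hcov : (⋃ n, G n) = Set.univ)
    (hdisj : Pairwise (Function.onFun Disjoint G)) :
    ∃ (n : ℕ) (s : Set (ℕ → ℕ)), s ⊆ G n ∧ TalAdmissible s ∧ s.Infinite :=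
  stmt14_general G hcov
end

section
/- Let Γ be a set and {f_δ}_{δ∈Δ} a family of real-valued functions on Γ such that each f_δ has countable support and for each γ ∈ Γ the set {δ : f_δ(γ) ≠ 0} is nonempty and countable. Then there exist partitions (Γ_d)_{d∈D} of Γ and (Δ_d)_{d∈D} of Δ into countable sets such that f_δ(γ) = 0 whenever γ ∈ Γ_{d₁}, δ ∈ Δ_{d₂} and d₁ ≠ d₂. -/
/-- Lemma 3.7: if each `f_δ` has countable support and each `γ` lies in the support of at
least one and at most countably many `f_δ`, then `Γ` and `Δ` admit matched partitions into
countable pieces (indexed here by the pairs of matched pieces themselves) such that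
`f_δ(γ) = 0` whenever `γ` and `δ` come from differently indexed pieces. -/
theorem stmt15 {Γ Δ : Type*} (f : Δ → Γ → ℝ)
    (h1 : ∀ δ, (Function.support (f δ)).Countable)
    (h2 : ∀ γ : Γ, { δ : Δ | f δ γ ≠ 0 }.Nonempty ∧ { δ : Δ | f δ γ ≠ 0 }.Countable) :
    ∃ P : Set (Set Γ × Set Δ),
      (∀ p ∈ P, p.1.Countable ∧ p.2.Countable) ∧
      (⋃ p ∈ P, p.1) = Set.univ ∧ (⋃ p ∈ P, p.2) = Set.univ ∧
      (∀ p ∈ P, ∀ q ∈ P, p ≠ q → p.1 ∩ q.1 = ∅ ∧ p.2 ∩ q.2 = ∅) ∧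
      (∀ p ∈ P, ∀ q ∈ P, p ≠ q → ∀ γ ∈ p.1, ∀ δ ∈ q.2, f δ γ = 0) := by
  classical
  -- bipartite adjacency relation on Γ ⊕ Δ
  set r : (Γ ⊕ Δ) → (Γ ⊕ Δ) → Prop := fun x y =>
    match x, y with
    | Sum.inl γ, Sum.inr δ => f δ γ ≠ 0
    | Sum.inr δ, Sum.inl γ => f δ γ ≠ 0
    | _, _ => False with hr
  have rsymm : ∀ x y, r x y → r y x := by
    rintro (γ | δ) (γ' | δ') h <;> exact h
  set e : (Γ ⊕ Δ) → (Γ ⊕ Δ) → Prop := Relation.ReflTransGen r with he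
  have esymm : ∀ x y, e x y → e y x := by
    intro x y h
    induction h with
    | refl => exact Relation.ReflTransGen.refl
    | tail _ hbc ih => exact Relation.ReflTransGen.head (rsymm _ _ hbc) ih
  have etrans : ∀ x y z, e x y → e y z → e x z := fun x y z h h' => h.trans h'
  -- neighbourhoods are countable
  have hnbr : ∀ x, {y | r x y}.Countable := by
    rintro (γ | δ)
    · have : {y | r (Sum.inl γ) y} = Sum.inr '' {δ | f δ γ ≠ 0} := by
        ext (γ' | δ') <;> simp [hr]
      rw [this]; exact ((h2 γ).2).image _
    · have : {y | r (Sum.inr δ) y} = Sum.inl '' Function.support (f δ) := by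
        ext (γ' | δ') <;> simp [hr, Function.mem_support]
      rw [this]; exact (h1 δ).image _
  -- reachability classes are countable
  have hclass : ∀ x, {y | e x y}.Countable := by
    intro x
    set S : ℕ → Set (Γ ⊕ Δ) :=
      fun n => Nat.rec {x} (fun _ s => ⋃ y ∈ s, {z | r y z}) n with hS
    have hScnt : ∀ n, (S n).Countable := by
      intro n
      induction n with
      | zero => exact Set.countable_singleton x
      | succ n ih => exact ih.biUnion (fun y _ => hnbr y)
    have hsub : {y | e x y} ⊆ ⋃ n, S n := by
      intro y hy
      simp only [Set.mem_setOf_eq, he] at hy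
      induction hy with
      | refl => exact Set.mem_iUnion.2 ⟨0, rfl⟩
      | tail _ hbc ih =>
        obtain ⟨n, hn⟩ := Set.mem_iUnion.1 ih
        exact Set.mem_iUnion.2 ⟨n + 1, Set.mem_biUnion hn hbc⟩
    exact (Set.countable_iUnion hScnt).mono hsub
  -- the partition
  refine ⟨Set.range (fun x => ({γ | e x (Sum.inl γ)}, {δ | e x (Sum.inr δ)})), ?_, ?_, ?_, ?_, ?_⟩
  · rintro p ⟨x, rfl⟩
    exact ⟨(hclass x).preimage Sum.inl_injective, (hclass x).preimage Sum.inr_injective⟩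
  · ext γ
    simp only [Set.mem_iUnion, Set.mem_univ, iff_true]
    exact ⟨_, ⟨Sum.inl γ, rfl⟩, Relation.ReflTransGen.refl⟩
  · ext δ
    simp only [Set.mem_iUnion, Set.mem_univ, iff_true]
    exact ⟨_, ⟨Sum.inr δ, rfl⟩, Relation.ReflTransGen.refl⟩
  all_goals
    rintro p ⟨x, rfl⟩ q ⟨y, rfl⟩ hpq
  · have key : ¬ e x y := by
      intro hxy
      apply hpq
      have hiff : ∀ z, e x z ↔ e y z :=
        fun z => ⟨fun h => etrans _ _ _ (esymm _ _ hxy) h, fun h => etrans _ _ _ hxy h⟩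
      ext z <;> simp [hiff]
    constructor
    · ext γ
      simp only [Set.mem_inter_iff, Set.mem_setOf_eq, Set.mem_empty_iff_false, iff_false,
        not_and]
      intro hx hy'
      exact key (etrans _ _ _ hx (esymm _ _ hy'))
    · ext δ
      simp only [Set.mem_inter_iff, Set.mem_setOf_eq, Set.mem_empty_iff_false, iff_false,
        not_and]
      intro hx hy'
      exact key (etrans _ _ _ hx (esymm _ _ hy'))
  · have key : ¬ e x y := by
      intro hxy
      apply hpq
      have hiff : ∀ z, e x z ↔ e y z :=
        fun z => ⟨fun h => etrans _ _ _ (esymm _ _ hxy) h, fun h => etrans _ _ _ hxy h⟩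
      ext z <;> simp [hiff]
    intro γ hγ δ hδ
    by_contra hne
    have hr' : r (Sum.inl γ) (Sum.inr δ) := hne
    exact key (etrans _ _ _ (etrans _ _ _ hγ (Relation.ReflTransGen.single hr'))
      (esymm _ _ hδ))
end

section
/- Let S be a quasi-Eberlein family with decomposition S = ∪_n S_n. Then the Eberleinization SE = { (1/n)·χ_s : s ∈ S_n } is a closed subset of [0,1]^Γ in the product topology. -/
open Set Filter Topology
open scoped Classical

variable {Γ : Type*}

/-- A quasi-Eberlein decomposition (Definition 3.1) of a family `S` of subsets of `Γ`:
`S` is a pointwise closed family of countable sets containing the singletons, each member is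
an increasing union of finite members, `S = ⋃_n S_n` with each `S_n` pointwise closed
(standing in for Eberlein compact) and the `S_n` pairwise disjoint, `Γ ⊆ S_1`, and the
combinatorial partition property (iii) holds.  (`Sn n` plays the role of `S_{n+1}`.) -/
structure QEDecomp (S : Set (Set Γ)) (Sn : ℕ → Set (Set Γ)) : Prop where
  closed : IsClosed (indicatorFun '' S)
  countable : ∀ s ∈ S, s.Countable
  singletons : ∀ γ : Γ, {γ} ∈ S
  incr : ∀ s ∈ S, ∃ t : ℕ → Set Γ, (∀ n, t n ∈ S ∧ (t n).Finite) ∧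
    Monotone t ∧ s = ⋃ n, t n
  union : S = ⋃ n, Sn n
  sn_closed : ∀ n, IsClosed (indicatorFun '' Sn n)
  sn_disjoint : Pairwise (Function.onFun Disjoint Sn)
  gamma_sub : ∀ γ : Γ, {γ} ∈ Sn 0
  part : ∀ P : Set (Set Γ), (∀ p ∈ P, p.Countable) → P.Pairwise Disjoint →
    ⋃₀ P = Set.univ → ∀ Q : ℕ → Set Γ, (⋃ n, Q n) = Set.univ →
      ∃ s ∈ S, ∃ n₀ : ℕ, (s ∩ Q n₀).Infinite ∧ ∀ p ∈ P, (s ∩ p).Subsingleton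

/-! The layers `(1/(n+1)) • χ(Sn n)` are closed. A limit point `g` with `g γ ≠ 0` has the
neighbourhood `{f | |f γ| > |g γ| / 2}`, which meets only the finitely many layers with
`1/(n+1) ≥ |g γ| / 2`, so `g` lies in one of them. The only other limit point is `0`, which is
`(1/(n+1)) • χ_∅`: the partition property forces `Γ` to be infinite, so the singletons tend to `∅`
along the cofinite filter, and `∅ ∈ S` because `S` is pointwise closed. -/

open scoped Pointwise

lemma indicator_const_eq_smul_indicatorFun (s : Set Γ) (c : ℝ) :
    (s.indicator fun _ => c) = c • indicatorFun s := by
  ext γ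
  by_cases hγ : γ ∈ s <;> simp [indicatorFun, hγ]

lemma indicator_one_div_succ_mem_Icc (s : Set Γ) (n : ℕ) (γ : Γ) :
    s.indicator (fun _ => (1 : ℝ) / (n + 1)) γ ∈ Icc (0 : ℝ) 1 := by
  have hn : (1 : ℝ) ≤ n + 1 := by linarith [n.cast_nonneg (α := ℝ)]
  by_cases hγ : γ ∈ s
  · rw [indicator_of_mem hγ]
    exact ⟨by positivity, div_le_one_of_le₀ hn (by positivity)⟩
  · rw [indicator_of_notMem hγ]
    exact ⟨le_rfl, zero_le_one⟩

lemma finite_setOf_le_one_div_succ {c : ℝ} (hc : 0 < c) :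
    {n : ℕ | c ≤ 1 / ((n : ℝ) + 1)}.Finite := by
  have h := tendsto_one_div_add_atTop_nhds_zero_nat.eventually_lt_const hc
  rw [← Nat.cofinite_eq_atTop] at h
  simpa only [not_lt] using eventually_cofinite.1 h

lemma mem_iUnion_of_mem_closure_of_finite_meets {X ι : Type*} [TopologicalSpace X]
    {A : ι → Set X} (hA : ∀ i, IsClosed (A i)) {x : X} (hx : x ∈ closure (⋃ i, A i))
    {U : Set X} (hU : IsOpen U) (hxU : x ∈ U) (hfin : {i | (U ∩ A i).Nonempty}.Finite) :
    x ∈ ⋃ i, A i := by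
  have hsub : U ∩ ⋃ i, A i ⊆ ⋃ i ∈ {i | (U ∩ A i).Nonempty}, A i := by
    rintro y ⟨hyU, hy⟩
    obtain ⟨i, hi⟩ := mem_iUnion.1 hy
    exact mem_biUnion ⟨y, hyU, hi⟩ hi
  exact iUnion₂_subset_iUnion _ _ <|
    (hfin.isClosed_biUnion fun i _ => hA i).closure_subset_iff.2 hsub
      (hU.inter_closure ⟨hxU, hx⟩)

lemma tendsto_indicatorFun_singleton_cofinite :
    Tendsto (fun γ : Γ => indicatorFun {γ}) cofinite (𝓝 0) := by
  refine tendsto_pi_nhds.2 fun δ => tendsto_const_nhds.congr' ?_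
  filter_upwards [eventually_cofinite_ne δ] with γ hγ
  simp [indicatorFun, Ne.symm hγ]

def eberleinization (Sn : ℕ → Set (Set Γ)) : Set (Γ → ℝ) :=
  {g | ∃ n : ℕ, ∃ s ∈ Sn n, g = s.indicator fun _ => (1 : ℝ) / (n + 1)}

lemma eberleinization_eq_iUnion (Sn : ℕ → Set (Set Γ)) :
    eberleinization Sn = ⋃ n : ℕ, ((1 : ℝ) / (n + 1)) • (indicatorFun '' Sn n) := by
  ext g
  simp [eberleinization, mem_smul_set, indicator_const_eq_smul_indicatorFun, eq_comm]

lemma mem_Icc_of_mem_eberleinization {Sn : ℕ → Set (Set Γ)} {g : Γ → ℝ}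
    (hg : g ∈ eberleinization Sn) (γ : Γ) : g γ ∈ Icc (0 : ℝ) 1 := by
  obtain ⟨n, s, -, rfl⟩ := hg
  exact indicator_one_div_succ_mem_Icc s n γ

lemma mem_eberleinization_of_mem_closure {Sn : ℕ → Set (Set Γ)}
    (hSn : ∀ n, IsClosed (indicatorFun '' Sn n)) {g : Γ → ℝ}
    (hg : g ∈ closure (eberleinization Sn)) {γ : Γ} (hγ : g γ ≠ 0) :
    g ∈ eberleinization Sn := by
  rw [eberleinization_eq_iUnion] at hg ⊢
  have hc : 0 < |g γ| / 2 := by positivity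
  refine mem_iUnion_of_mem_closure_of_finite_meets
    (fun n => (hSn n).smul_of_ne_zero (by positivity)) hg
    (isOpen_lt continuous_const (continuous_apply γ).abs) (half_lt_self (abs_pos.2 hγ))
    ((finite_setOf_le_one_div_succ hc).subset ?_)
  rintro n ⟨f, hfU, hf⟩
  obtain ⟨_, ⟨s, -, rfl⟩, rfl⟩ := mem_smul_set.1 hf
  by_cases hγs : γ ∈ s
  · simp only [mem_ofPred_eq, Pi.smul_apply, indicatorFun, indicator_of_mem hγs, smul_eq_mul,
      mul_one] at hfU
    exact hfU.le.trans_eq (abs_of_pos (by positivity))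
  · simp only [mem_ofPred_eq, Pi.smul_apply, indicatorFun, indicator_of_notMem hγs, smul_zero,
      abs_zero] at hfU
    exact absurd hfU hc.not_gt

namespace QEDecomp

variable {S : Set (Set Γ)} {Sn : ℕ → Set (Set Γ)}

lemma infinite (h : QEDecomp S Sn) : Infinite Γ := by
  by_contra hfin
  rw [not_infinite_iff_finite] at hfin
  obtain ⟨s, -, n, hinf, -⟩ := h.part {univ} (by simp [countable_univ])
    (pairwise_singleton _ _) (sUnion_singleton _) (fun _ => univ) (iUnion_const _)
  exact hinf (toFinite _)

lemma empty_mem (h : QEDecomp S Sn) : ∅ ∈ S := by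
  have := h.infinite
  obtain ⟨s, hs, hs0⟩ : (0 : Γ → ℝ) ∈ indicatorFun '' S :=
    h.closed.mem_of_tendsto tendsto_indicatorFun_singleton_cofinite
      (Eventually.of_forall fun γ => ⟨{γ}, h.singletons γ, rfl⟩)
  convert hs
  exact (eq_empty_of_forall_notMem fun γ hγ => by
    simpa [indicatorFun, hγ] using congr_fun hs0 γ).symm

lemma zero_mem_eberleinization (h : QEDecomp S Sn) : 0 ∈ eberleinization Sn := by
  obtain ⟨n, hn⟩ := mem_iUnion.1 (h.union ▸ h.empty_mem)
  exact ⟨n, ∅, hn, (indicator_empty' _).symm⟩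

lemma isClosed_eberleinization (h : QEDecomp S Sn) : IsClosed (eberleinization Sn) := by
  refine isClosed_of_closure_subset fun g hg => ?_
  by_cases hg0 : g = 0
  · exact hg0 ▸ h.zero_mem_eberleinization
  · obtain ⟨γ, hγ⟩ := Function.ne_iff.1 hg0
    exact mem_eberleinization_of_mem_closure h.sn_closed hg hγ

end QEDecomp

/-- The Eberleinization `SE = {(1/n)·χ_s : s ∈ S_n}` of a quasi-Eberlein family is a closed
subset of `[0,1]^Γ` in the product topology. -/
theorem stmt17 {Γ : Type*} (S : Set (Set Γ)) (Sn : ℕ → Set (Set Γ))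
    (h : QEDecomp S Sn) :
    (∀ g ∈ { g : Γ → ℝ | ∃ n : ℕ, ∃ s ∈ Sn n,
        g = Set.indicator s fun _ => (1 : ℝ) / (n + 1) },
      ∀ γ, g γ ∈ Set.Icc (0 : ℝ) 1) ∧
    IsClosed { g : Γ → ℝ | ∃ n : ℕ, ∃ s ∈ Sn n,
      g = Set.indicator s fun _ => (1 : ℝ) / (n + 1) } :=
  ⟨fun _ hg => mem_Icc_of_mem_eberleinization hg, h.isClosed_eberleinization⟩
end
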